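/- arXiv:1910.13564 — 7 statements merged into one kernel-verified Lean document; each statement's English description precedes it below -/
import Mathlib

section
/- For every f ∈ C^{r0}(ℝ^n, ℝ) and every z ∈ ℝ^n one has |e^f|_{T_z} ≤ e^{f(z)} (1 + |f|_{T_z})^{r0} and |e^f − 1|_{T_z} ≤ max(e^{f(z)}, 1) · (1 + |f|_{T_z})^{r0} · |f|_{T_z}. -/
/-!
Write `g = exp ∘ f`, `a α = |∂^α g(z)| / α!` and `b α = |∂^α f(z)| / α!`. For `α ≠ 0`, split off
one derivative `∂_i` and use `∂_i g = g ∂_i f`; the Leibniz rule and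
`C(α - e_i, γ) γ! (α - γ)! ≤ α!` give the convolution inequality `a α ≤ ∑_{γ < α} a γ b (α - γ)`.
With `B = ∑_{α ≠ 0} b α`, it bounds the part of `∑_{|α| ≤ m + 1} a α` with `α ≠ 0` by
`(∑_{|γ| ≤ m} a γ) B`, so induction on `m` gives `∑_{|α| ≤ m} a α ≤ e^{f(z)} (1 + B)^m`;
this is the first bound for `m = r0` since `B ≤ |f|_{T_z}`. For `e^f - 1` only the term `α = 0`
changes; it is `|e^{f(z)} - 1| ≤ max(e^{f(z)}, 1) |f(z)|`, while the terms with `α ≠ 0` are at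
most `(∑ a) B` by the convolution inequality.
-/

open scoped BigOperators

/-- Partial derivative in the `i`-th coordinate direction. -/
noncomputable def pd1 {n : ℕ} (i : Fin n) (f : (Fin n → ℝ) → ℝ) : (Fin n → ℝ) → ℝ :=
  fun z => fderiv ℝ f z (Pi.single i 1)

/-- Iterated partial derivative in one coordinate direction. -/
noncomputable def pdPow {n : ℕ} (i : Fin n) : ℕ → ((Fin n → ℝ) → ℝ) → (Fin n → ℝ) → ℝ
  | 0, f => f
  | k + 1, f => pd1 i (pdPow i k f)

/-- Multiindex partial derivative `∂^α`. -/
noncomputable def pdMulti {n : ℕ} (α : Fin n → ℕ) (f : (Fin n → ℝ) → ℝ) : (Fin n → ℝ) → ℝ :=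
  (List.finRange n).foldr (fun i g => pdPow i (α i) g) f

/-- Multiindex factorial `α! = α₁! ⋯ αₙ!`. -/
def mfact {n : ℕ} (α : Fin n → ℕ) : ℕ := ∏ i, Nat.factorial (α i)

/-- The truncated Taylor norm `|f|_{T_z} = ∑_{|α| ≤ r0} |∂^α f(z)| / α!`. -/
noncomputable def taylorNorm {n : ℕ} (r0 : ℕ) (f : (Fin n → ℝ) → ℝ) (z : Fin n → ℝ) : ℝ :=
  ∑ α ∈ (Finset.Iic (fun _ : Fin n => r0)).filter (fun α => ∑ i, α i ≤ r0),
    |pdMulti α f z| / ((mfact α : ℕ) : ℝ)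

open Finset

local notation "𝐞" i:max => (Pi.single i 1 : Fin _ → ℕ)

namespace MultiIndex

variable {n : ℕ}

def deg (α : Fin n → ℕ) : ℕ := ∑ i, α i

lemma deg_add (α β : Fin n → ℕ) : deg (α + β) = deg α + deg β :=
  sum_add_distrib

lemma deg_add_single (δ : Fin n → ℕ) (i : Fin n) : deg (δ + 𝐞 i) = deg δ + 1 := by
  rw [deg_add]
  simp [deg]

lemma deg_lt_deg {γ α : Fin n → ℕ} (h : γ < α) : deg γ < deg α := by
  obtain ⟨hle, j, hj⟩ := Pi.lt_def.mp h
  exact sum_lt_sum (fun i _ => hle i) ⟨j, mem_univ j, hj⟩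

lemma deg_pos {α : Fin n → ℕ} (h : α ≠ 0) : 0 < deg α := by
  simpa [deg] using deg_lt_deg (pos_iff_ne_zero.mpr h)

lemma single_one_le_iff {γ : Fin n → ℕ} {i : Fin n} : 𝐞 i ≤ γ ↔ γ i ≠ 0 := by
  refine ⟨fun h => Nat.one_le_iff_ne_zero.mp (by simpa using h i), fun h j => ?_⟩
  rcases eq_or_ne j i with rfl | hj
  · simpa [Nat.one_le_iff_ne_zero] using h
  · simp [hj]

lemma exists_eq_add_single {α : Fin n → ℕ} (hα : α ≠ 0) :
    ∃ i δ, α = δ + 𝐞 i ∧ ∀ j, i < j → δ j = 0 := by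
  classical
  set s := univ.filter fun j => α j ≠ 0
  have hs : s.Nonempty := by
    obtain ⟨j, hj⟩ := Function.ne_iff.mp hα
    exact ⟨j, by simpa [s] using hj⟩
  have hi : α (s.max' hs) ≠ 0 := (mem_filter.mp (s.max'_mem hs)).2
  refine ⟨s.max' hs, α - 𝐞 (s.max' hs),
    (tsub_add_cancel_of_le (single_one_le_iff.mpr hi)).symm, fun j hj => ?_⟩
  have hj0 : α j = 0 := by
    by_contra h
    exact (s.le_max' j (by simpa [s] using h)).not_gt hj
  simp [hj0]

@[elab_as_elim]
lemma induction_add_single {P : (Fin n → ℕ) → Prop} (zero : P 0)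
    (add_single : ∀ δ i, (∀ j, i < j → δ j = 0) → P δ → P (δ + 𝐞 i))
    (α : Fin n → ℕ) : P α := by
  induction h : deg α using Nat.strong_induction_on generalizing α with
  | _ m ih =>
    rcases eq_or_ne α 0 with rfl | hα
    · exact zero
    obtain ⟨i, δ, rfl, hδ⟩ := exists_eq_add_single hα
    exact add_single δ i hδ (ih (deg δ) (by simp [← h, deg_add_single]) δ rfl)

def mchoose (β γ : Fin n → ℕ) : ℕ := ∏ j, (β j).choose (γ j)

lemma mchoose_eq_zero_of_not_le {β γ : Fin n → ℕ} (h : ¬ γ ≤ β) : mchoose β γ = 0 := by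
  obtain ⟨j, hj⟩ := not_forall.mp (mt Pi.le_def.mpr h)
  exact prod_eq_zero (mem_univ j) (Nat.choose_eq_zero_of_lt (not_le.mp hj))

lemma mchoose_add_single_of_eq_zero {δ γ : Fin n → ℕ} {i : Fin n} (h : γ i = 0) :
    mchoose (δ + 𝐞 i) γ = mchoose δ γ :=
  prod_congr rfl fun j _ => by rcases eq_or_ne j i with rfl | hj <;> simp [*]

lemma mchoose_add_single_add_single (δ γ : Fin n → ℕ) (i : Fin n) :
    mchoose (δ + 𝐞 i) (γ + 𝐞 i) = mchoose δ (γ + 𝐞 i) + mchoose δ γ := by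
  simp only [mchoose, Fintype.prod_eq_mul_prod_compl i]
  have hδ : ∏ j ∈ {i}ᶜ, (δ j).choose ((γ + 𝐞 i) j) = ∏ j ∈ {i}ᶜ, (δ j).choose (γ j) :=
    prod_congr rfl fun j hj => by simp [show j ≠ i by simpa using hj]
  have hδi : ∏ j ∈ {i}ᶜ, ((δ + 𝐞 i) j).choose ((γ + 𝐞 i) j) = ∏ j ∈ {i}ᶜ, (δ j).choose (γ j) :=
    prod_congr rfl fun j hj => by simp [show j ≠ i by simpa using hj]
  rw [hδ, hδi]
  simp [Nat.choose_succ_succ', add_mul, add_comm]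

lemma mfact_pos (α : Fin n → ℕ) : 0 < mfact α :=
  prod_pos fun _ _ => Nat.factorial_pos _

lemma mfact_add_single (δ : Fin n → ℕ) (i : Fin n) :
    mfact (δ + 𝐞 i) = mfact δ * (δ i + 1) := by
  simp only [mfact, Fintype.prod_eq_mul_prod_compl i]
  have hcompl : ∏ j ∈ {i}ᶜ, ((δ + 𝐞 i) j).factorial = ∏ j ∈ {i}ᶜ, (δ j).factorial :=
    prod_congr rfl fun j hj => by simp [show j ≠ i by simpa using hj]
  rw [hcompl]
  simp [Nat.factorial_succ]
  ring

lemma mchoose_mul_mfact_mul_mfact {γ δ : Fin n → ℕ} (h : γ ≤ δ) :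
    mchoose δ γ * mfact γ * mfact (δ - γ) = mfact δ := by
  simp only [mchoose, mfact, ← prod_mul_distrib]
  exact prod_congr rfl fun j _ => Nat.choose_mul_factorial_mul_factorial (h j)

lemma mchoose_mul_mfact_mul_mfact_le {γ δ : Fin n → ℕ} (i : Fin n) (h : γ ≤ δ) :
    mchoose δ γ * mfact γ * mfact (δ + 𝐞 i - γ) ≤ mfact (δ + 𝐞 i) := by
  rw [← tsub_add_eq_add_tsub h, mfact_add_single, mfact_add_single, ← mul_assoc,
    mchoose_mul_mfact_mul_mfact h]
  exact Nat.mul_le_mul_left _ (by simp)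

lemma sum_Iic_add_single {M : Type*} [AddCommMonoid M] (δ : Fin n → ℕ) (i : Fin n)
    (F : (Fin n → ℕ) → M) :
    ∑ γ ∈ Iic (δ + 𝐞 i), F γ
      = ∑ γ ∈ (Iic (δ + 𝐞 i)).filter (fun γ => γ i = 0), F γ
        + ∑ γ ∈ Iic δ, F (γ + 𝐞 i) := by
  rw [← sum_filter_add_sum_filter_not _ (fun γ => γ i = 0)]
  congr 1
  have hmap : (Iic δ).map (addRightEmbedding (𝐞 i))
      = (Iic (δ + 𝐞 i)).filter (fun γ => ¬ γ i = 0) := by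
    ext γ
    simp only [mem_map, mem_Iic, mem_filter, addRightEmbedding_apply]
    constructor
    · rintro ⟨γ', hγ', rfl⟩
      exact ⟨add_le_add hγ' le_rfl, by simp⟩
    · rintro ⟨hγ, hi⟩
      exact ⟨γ - 𝐞 i, tsub_le_iff_right.mpr hγ, tsub_add_cancel_of_le (single_one_le_iff.mpr hi)⟩
  rw [← hmap, sum_map]
  rfl

lemma sum_Iic_add_single_mchoose {R : Type*} [CommSemiring R] (δ : Fin n → ℕ) (i : Fin n)
    (T : (Fin n → ℕ) → R) :
    ∑ γ ∈ Iic (δ + 𝐞 i), (mchoose (δ + 𝐞 i) γ : R) * T γ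
      = ∑ γ ∈ Iic δ, (mchoose δ γ : R) * T (γ + 𝐞 i)
        + ∑ γ ∈ Iic δ, (mchoose δ γ : R) * T γ := by
  have hextend : ∑ γ ∈ Iic δ, (mchoose δ γ : R) * T γ
      = ∑ γ ∈ Iic (δ + 𝐞 i), (mchoose δ γ : R) * T γ :=
    sum_subset (Iic_subset_Iic.mpr le_self_add) fun γ _ hγ => by
      rw [mchoose_eq_zero_of_not_le (by simpa using hγ), Nat.cast_zero, zero_mul]
  rw [hextend, sum_Iic_add_single δ i, sum_Iic_add_single δ i,
    sum_congr rfl fun γ hγ => by rw [mchoose_add_single_of_eq_zero (mem_filter.mp hγ).2]]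
  simp only [mchoose_add_single_add_single, Nat.cast_add, add_mul, sum_add_distrib]
  abel

end MultiIndex

open MultiIndex

section PartialDerivatives

variable {n : ℕ}

lemma pd1_add {g h : (Fin n → ℝ) → ℝ} (i : Fin n) (hg : Differentiable ℝ g)
    (hh : Differentiable ℝ h) : pd1 i (g + h) = pd1 i g + pd1 i h := by
  funext z
  simp [pd1, fderiv_add (hg z) (hh z)]

lemma pd1_mul {g h : (Fin n → ℝ) → ℝ} (i : Fin n) (hg : Differentiable ℝ g)
    (hh : Differentiable ℝ h) : pd1 i (g * h) = pd1 i g * h + g * pd1 i h := by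
  funext z
  simp [pd1, fderiv_mul (hg z) (hh z)]
  ring

lemma pd1_exp {g : (Fin n → ℝ) → ℝ} (i : Fin n) (hg : Differentiable ℝ g) :
    pd1 i (fun w => Real.exp (g w)) = (fun w => Real.exp (g w)) * pd1 i g := by
  funext z
  simp [pd1, fderiv_exp (hg z)]

lemma pd1_sub_const (g : (Fin n → ℝ) → ℝ) (i : Fin n) (c : ℝ) :
    pd1 i (fun w => g w - c) = pd1 i g := by
  funext z
  simp [pd1, fderiv_sub_const]

lemma contDiff_pd1 {m : ℕ} {f : (Fin n → ℝ) → ℝ} (i : Fin n) (hf : ContDiff ℝ (m + 1 : ℕ) f) :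
    ContDiff ℝ m (pd1 i f) :=
  (hf.fderiv_right (by norm_cast)).clm_apply contDiff_const

lemma pdPow_succ' (i : Fin n) (k : ℕ) (f : (Fin n → ℝ) → ℝ) :
    pdPow i (k + 1) f = pdPow i k (pd1 i f) := by
  induction k with
  | zero => rfl
  | succ k ih => rw [pdPow, ih, pdPow]

lemma foldr_pdPow_of_forall_eq_zero {α : Fin n → ℕ} (f : (Fin n → ℝ) → ℝ) {l : List (Fin n)}
    (h : ∀ j ∈ l, α j = 0) : l.foldr (fun j g => pdPow j (α j) g) f = f := by
  induction l with
  | nil => rfl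
  | cons a l ih =>
    rw [List.foldr_cons, h a List.mem_cons_self, ih fun j hj => h j (List.mem_cons_of_mem a hj)]
    rfl

lemma foldr_pdPow_add_single {δ : Fin n → ℕ} {i : Fin n} (f : (Fin n → ℝ) → ℝ)
    {l : List (Fin n)} (hl : l.Pairwise (· < ·)) (hi : i ∈ l) (hδ : ∀ j ∈ l, i < j → δ j = 0) :
    l.foldr (fun j g => pdPow j ((δ + 𝐞 i) j) g) f
      = l.foldr (fun j g => pdPow j (δ j) g) (pd1 i f) := by
  induction l with
  | nil => simp at hi
  | cons a l ih =>
    rw [List.pairwise_cons] at hl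
    simp only [List.foldr_cons]
    rcases eq_or_ne a i with rfl | hai
    · have hl0 : ∀ j ∈ l, δ j = 0 := fun j hj => hδ j (List.mem_cons_of_mem a hj) (hl.1 j hj)
      rw [foldr_pdPow_of_forall_eq_zero _ hl0, foldr_pdPow_of_forall_eq_zero _ fun j hj => by
        simp [hl0 j hj, (hl.1 j hj).ne']]
      simp [pdPow_succ']
    · rw [ih hl.2 (by simpa [Ne.symm hai] using hi) fun j hj => hδ j (List.mem_cons_of_mem a hj)]
      simp [hai]

@[simp] lemma pdMulti_zero (f : (Fin n → ℝ) → ℝ) : pdMulti 0 f = f :=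
  foldr_pdPow_of_forall_eq_zero f fun _ _ => rfl

/-- `pdMulti` applies the derivatives in the last coordinate direction first. Mixed partials are not
known to commute, so a derivative can only be split off in the last direction where the multi-index
is nonzero; this is why `MultiIndex.induction_add_single` adds units only there. -/
lemma pdMulti_add_single {δ : Fin n → ℕ} {i : Fin n} (hδ : ∀ j, i < j → δ j = 0)
    (f : (Fin n → ℝ) → ℝ) : pdMulti (δ + 𝐞 i) f = pdMulti δ (pd1 i f) :=
  foldr_pdPow_add_single f (List.pairwise_lt_finRange n) (List.mem_finRange i) fun j _ => hδ j

lemma pdMulti_sub_pd1 {γ δ : Fin n → ℕ} {i : Fin n} (hδ : ∀ j, i < j → δ j = 0) (h : γ ≤ δ)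
    (f : (Fin n → ℝ) → ℝ) : pdMulti (δ - γ) (pd1 i f) = pdMulti (δ + 𝐞 i - γ) f := by
  rw [← tsub_add_eq_add_tsub h, pdMulti_add_single fun j hj => by simp [hδ j hj]]

lemma pdMulti_add (α : Fin n → ℕ) :
    ∀ {X Y : (Fin n → ℝ) → ℝ}, ContDiff ℝ (deg α) X → ContDiff ℝ (deg α) Y →
      pdMulti α (X + Y) = pdMulti α X + pdMulti α Y := by
  induction α using MultiIndex.induction_add_single with
  | zero => intros; simp
  | add_single δ i hδ ih =>
    intro X Y hX hY
    rw [deg_add_single] at hX hY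
    simp only [pdMulti_add_single hδ]
    rw [pd1_add i (hX.differentiable (by simp)) (hY.differentiable (by simp)),
      ih (contDiff_pd1 i hX) (contDiff_pd1 i hY)]

lemma pdMulti_sub_const {α : Fin n → ℕ} (hα : α ≠ 0) (g : (Fin n → ℝ) → ℝ) (c : ℝ) :
    pdMulti α (fun w => g w - c) = pdMulti α g := by
  obtain ⟨i, δ, rfl, hδ⟩ := exists_eq_add_single hα
  rw [pdMulti_add_single hδ, pdMulti_add_single hδ, pd1_sub_const]

theorem pdMulti_mul (β : Fin n → ℕ) :
    ∀ {g h : (Fin n → ℝ) → ℝ}, ContDiff ℝ (deg β) g → ContDiff ℝ (deg β) h → ∀ z,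
      pdMulti β (g * h) z
        = ∑ γ ∈ Iic β, (mchoose β γ : ℝ) * (pdMulti γ g z * pdMulti (β - γ) h z) := by
  induction β using MultiIndex.induction_add_single with
  | zero =>
    intros
    have : Iic (0 : Fin n → ℕ) = {0} := by ext; simp
    simp [this, mchoose]
  | add_single δ i hδ ih =>
    intro g h hg hh z
    rw [deg_add_single] at hg hh
    have hg' := contDiff_pd1 i hg
    have hh' := contDiff_pd1 i hh
    rw [pdMulti_add_single hδ, pd1_mul i (hg.differentiable (by simp)) (hh.differentiable (by simp))]
    replace hg : ContDiff ℝ (deg δ) g := hg.of_le (by exact_mod_cast (deg δ).le_succ)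
    replace hh : ContDiff ℝ (deg δ) h := hh.of_le (by exact_mod_cast (deg δ).le_succ)
    rw [pdMulti_add (X := pd1 i g * h) (Y := g * pd1 i h) δ (hg'.mul hh) (hg.mul hh'),
      Pi.add_apply, ih hg' hh z, ih hg hh' z, sum_Iic_add_single_mchoose]
    congr 1 <;> refine sum_congr rfl fun γ hγ => ?_
    · have hγi : ∀ j, i < j → γ j = 0 := fun j hj =>
        Nat.eq_zero_of_le_zero (hδ j hj ▸ mem_Iic.mp hγ j)
      rw [pdMulti_add_single hγi, add_tsub_add_eq_tsub_right]
    · rw [pdMulti_sub_pd1 hδ (mem_Iic.mp hγ)]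

end PartialDerivatives

section TaylorTerms

variable {n : ℕ}

noncomputable def taylorTerm (f : (Fin n → ℝ) → ℝ) (z : Fin n → ℝ) (α : Fin n → ℕ) : ℝ :=
  |pdMulti α f z| / mfact α

def taylorIndex (n r : ℕ) : Finset (Fin n → ℕ) :=
  (Iic fun _ : Fin n => r).filter fun α => deg α ≤ r

lemma taylorNorm_eq_sum (r : ℕ) (f : (Fin n → ℝ) → ℝ) (z : Fin n → ℝ) :
    taylorNorm r f z = ∑ α ∈ taylorIndex n r, taylorTerm f z α :=
  rfl

lemma taylorTerm_nonneg (f : (Fin n → ℝ) → ℝ) (z : Fin n → ℝ) (α : Fin n → ℕ) :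
    0 ≤ taylorTerm f z α :=
  div_nonneg (abs_nonneg _) (Nat.cast_nonneg _)

@[simp] lemma taylorTerm_zero (f : (Fin n → ℝ) → ℝ) (z : Fin n → ℝ) : taylorTerm f z 0 = |f z| := by
  simp [taylorTerm, mfact]

lemma deg_le_of_mem_taylorIndex {r : ℕ} {α : Fin n → ℕ} (h : α ∈ taylorIndex n r) : deg α ≤ r :=
  (mem_filter.mp h).2

lemma mem_taylorIndex_of_le {r : ℕ} {α γ : Fin n → ℕ} (hα : α ∈ taylorIndex n r) (h : γ ≤ α) :
    γ ∈ taylorIndex n r := by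
  simp only [taylorIndex, mem_filter, mem_Iic] at hα ⊢
  exact ⟨h.trans hα.1, (sum_le_sum fun j _ => h j).trans hα.2⟩

lemma taylorNorm_eq_abs_add_sum (r : ℕ) (f : (Fin n → ℝ) → ℝ) (z : Fin n → ℝ) :
    taylorNorm r f z = |f z| + ∑ α ∈ (taylorIndex n r).filter (· ≠ 0), taylorTerm f z α := by
  have h0 : (0 : Fin n → ℕ) ∈ taylorIndex n r :=
    mem_filter.mpr ⟨mem_Iic.mpr fun _ => Nat.zero_le r, by simp [deg]⟩
  rw [taylorNorm_eq_sum, ← sum_filter_add_sum_filter_not _ (· = 0), filter_eq', if_pos h0,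
    sum_singleton, taylorTerm_zero]

lemma taylorNorm_sub_const (r : ℕ) (g : (Fin n → ℝ) → ℝ) (c : ℝ) (z : Fin n → ℝ) :
    taylorNorm r (fun w => g w - c) z
      = |g z - c| + ∑ α ∈ (taylorIndex n r).filter (· ≠ 0), taylorTerm g z α := by
  rw [taylorNorm_eq_abs_add_sum]
  congr 1
  exact sum_congr rfl fun α hα => by
    simp only [taylorTerm, pdMulti_sub_const (mem_filter.mp hα).2]

lemma taylorTerm_exp_le {r : ℕ} {f : (Fin n → ℝ) → ℝ} (hf : ContDiff ℝ r f) (z : Fin n → ℝ)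
    {α : Fin n → ℕ} (hα : α ≠ 0) (hαr : deg α ≤ r) :
    taylorTerm (fun w => Real.exp (f w)) z α
      ≤ ∑ γ ∈ Iio α, taylorTerm (fun w => Real.exp (f w)) z γ * taylorTerm f z (α - γ) := by
  obtain ⟨i, δ, rfl, hδ⟩ := exists_eq_add_single hα
  set g := fun w => Real.exp (f w)
  rw [deg_add_single] at hαr
  have hf' : ContDiff ℝ (deg δ + 1 : ℕ) f := hf.of_le (by exact_mod_cast hαr)
  have hderiv : pdMulti (δ + 𝐞 i) g z
      = ∑ γ ∈ Iic δ, (mchoose δ γ : ℝ) * (pdMulti γ g z * pdMulti (δ + 𝐞 i - γ) f z) := by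
    rw [pdMulti_add_single hδ, pd1_exp i (hf'.differentiable (by simp)),
      pdMulti_mul δ (hf'.exp.of_le (by exact_mod_cast (deg δ).le_succ)) (contDiff_pd1 i hf') z]
    exact sum_congr rfl fun γ hγ => by rw [pdMulti_sub_pd1 hδ (mem_Iic.mp hγ)]
  have hterm : ∀ γ ∈ Iic δ, (mchoose δ γ : ℝ) * (|pdMulti γ g z| * |pdMulti (δ + 𝐞 i - γ) f z|)
      / mfact (δ + 𝐞 i) ≤ taylorTerm g z γ * taylorTerm f z (δ + 𝐞 i - γ) := by
    intro γ hγ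
    have hfact : (mchoose δ γ : ℝ) * mfact γ * mfact (δ + 𝐞 i - γ) ≤ mfact (δ + 𝐞 i) := by
      exact_mod_cast mchoose_mul_mfact_mul_mfact_le i (mem_Iic.mp hγ)
    have hpos : ∀ β : Fin n → ℕ, (0 : ℝ) < mfact β := fun β => Nat.cast_pos.mpr (mfact_pos β)
    rw [taylorTerm, taylorTerm, div_mul_div_comm, div_le_div_iff₀ (hpos _) (mul_pos (hpos γ) (hpos _))]
    nlinarith [mul_le_mul_of_nonneg_left hfact
      (by positivity : 0 ≤ |pdMulti γ g z| * |pdMulti (δ + 𝐞 i - γ) f z|)]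
  calc taylorTerm g z (δ + 𝐞 i)
      ≤ ∑ γ ∈ Iic δ, (mchoose δ γ : ℝ) * (|pdMulti γ g z| * |pdMulti (δ + 𝐞 i - γ) f z|)
          / mfact (δ + 𝐞 i) := by
        rw [taylorTerm, hderiv, ← sum_div]
        gcongr
        refine (abs_sum_le_sum_abs _ _).trans (le_of_eq (sum_congr rfl fun γ _ => ?_))
        rw [abs_mul, abs_mul, Nat.abs_cast]
    _ ≤ ∑ γ ∈ Iic δ, taylorTerm g z γ * taylorTerm f z (δ + 𝐞 i - γ) := sum_le_sum hterm
    _ ≤ ∑ γ ∈ Iio (δ + 𝐞 i), taylorTerm g z γ * taylorTerm f z (δ + 𝐞 i - γ) :=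
        sum_le_sum_of_subset_of_nonneg
          (fun γ hγ => mem_Iio.mpr ((mem_Iic.mp hγ).trans_lt (lt_add_of_pos_right δ (by simp))))
          fun _ _ _ => mul_nonneg (taylorTerm_nonneg _ _ _) (taylorTerm_nonneg _ _ _)

end TaylorTerms

section Majorant

variable {n : ℕ}

lemma sum_le_sum_mul_sum_of_le_sum_Iio {I s t : Finset (Fin n → ℕ)} {a b : (Fin n → ℕ) → ℝ}
    (ha : ∀ α, 0 ≤ a α) (hb : ∀ α, 0 ≤ b α) (hI : ∀ α ∈ I, ∀ γ ≤ α, γ ∈ I) (hs : s ⊆ I)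
    (hst : ∀ α ∈ s, ∀ γ < α, γ ∈ t) (hrec : ∀ α ∈ s, a α ≤ ∑ γ ∈ Iio α, a γ * b (α - γ)) :
    ∑ α ∈ s, a α ≤ (∑ γ ∈ t, a γ) * ∑ δ ∈ I.filter (· ≠ 0), b δ := by
  have hinj : Set.InjOn (fun p : (_ : Fin n → ℕ) × (Fin n → ℕ) => (p.2, p.1 - p.2))
      (s.sigma Iio) := by
    rintro ⟨α, γ⟩ hp ⟨α', γ'⟩ hp' h
    simp only [coe_sigma, Set.mem_sigma_iff, mem_coe, mem_Iio, Prod.mk.injEq] at hp hp' h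
    obtain ⟨rfl, h⟩ := h
    rw [← tsub_add_cancel_of_le hp.2.le, ← tsub_add_cancel_of_le hp'.2.le, h]
  calc ∑ α ∈ s, a α ≤ ∑ α ∈ s, ∑ γ ∈ Iio α, a γ * b (α - γ) := sum_le_sum hrec
    _ = ∑ p ∈ s.sigma Iio, a p.2 * b (p.1 - p.2) := sum_sigma' _ _ _
    _ = ∑ q ∈ (s.sigma Iio).image fun p => (p.2, p.1 - p.2), a q.1 * b q.2 :=
        (sum_image (f := fun q => a q.1 * b q.2) hinj).symm
    _ ≤ ∑ q ∈ t ×ˢ I.filter (· ≠ 0), a q.1 * b q.2 := by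
        refine sum_le_sum_of_subset_of_nonneg ?_ fun q _ _ => mul_nonneg (ha _) (hb _)
        intro q hq
        obtain ⟨⟨α, γ⟩, hp, rfl⟩ := mem_image.mp hq
        rw [mem_sigma, mem_Iio] at hp
        exact mem_product.mpr ⟨hst α hp.1 γ hp.2,
          mem_filter.mpr ⟨hI α (hs hp.1) _ tsub_le_self, (tsub_pos_of_lt hp.2).ne'⟩⟩
    _ = _ := by rw [sum_mul_sum, sum_product]

lemma sum_filter_deg_le_le_mul_pow {I : Finset (Fin n → ℕ)} {a b : (Fin n → ℕ) → ℝ}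
    (ha : ∀ α, 0 ≤ a α) (hb : ∀ α, 0 ≤ b α) (hI : ∀ α ∈ I, ∀ γ ≤ α, γ ∈ I)
    (hrec : ∀ α ∈ I, α ≠ 0 → a α ≤ ∑ γ ∈ Iio α, a γ * b (α - γ)) (m : ℕ) :
    ∑ α ∈ I.filter (deg · ≤ m), a α ≤ a 0 * (1 + ∑ δ ∈ I.filter (· ≠ 0), b δ) ^ m := by
  set B := ∑ δ ∈ I.filter (· ≠ 0), b δ
  have hB : 0 ≤ B := sum_nonneg fun _ _ => hb _
  have hsplit : ∀ k, ∑ α ∈ I.filter (deg · ≤ k), a α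
      ≤ a 0 + ∑ α ∈ (I.filter (deg · ≤ k)).filter (· ≠ 0), a α := by
    intro k
    rw [← sum_filter_add_sum_filter_not (I.filter _) (· = 0), filter_eq']
    gcongr
    split_ifs <;> simp [ha 0]
  induction m with
  | zero =>
    refine (hsplit 0).trans (le_of_eq ?_)
    rw [sum_eq_zero fun α hα => ?_, add_zero, pow_zero, mul_one]
    simp only [mem_filter, nonpos_iff_eq_zero] at hα
    exact absurd hα.1.2 (deg_pos hα.2).ne'
  | succ m ih =>
    have hconv := sum_le_sum_mul_sum_of_le_sum_Iio ha hb hI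
      (s := (I.filter (deg · ≤ m + 1)).filter (· ≠ 0)) (t := I.filter (deg · ≤ m))
      (filter_subset _ _ |>.trans (filter_subset _ _))
      (fun α hα γ hγ => by
        simp only [mem_filter] at hα ⊢
        exact ⟨hI α hα.1.1 γ hγ.le, Nat.le_of_lt_succ (deg_lt_deg hγ |>.trans_le hα.1.2)⟩)
      (fun α hα => by
        simp only [mem_filter] at hα
        exact hrec α hα.1.1 hα.2)
    have h1 : 1 ≤ (1 + B) ^ m := one_le_pow₀ (by linarith)
    calc ∑ α ∈ I.filter (deg · ≤ m + 1), a α ≤ a 0 + (∑ γ ∈ I.filter (deg · ≤ m), a γ) * B :=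
          (hsplit _).trans (by gcongr)
      _ ≤ a 0 + a 0 * (1 + B) ^ m * B := by gcongr
      _ ≤ a 0 * (1 + B) ^ (m + 1) := by rw [pow_succ]; nlinarith [ha 0]

end Majorant

lemma abs_exp_sub_one_le (x : ℝ) : |Real.exp x - 1| ≤ max (Real.exp x) 1 * |x| := by
  rcases le_total 0 x with hx | hx
  · rw [abs_of_nonneg (by linarith [Real.add_one_le_exp x]), abs_of_nonneg hx]
    have h := mul_le_mul_of_nonneg_left (Real.one_sub_le_exp_neg x) (Real.exp_pos x).le
    rw [← Real.exp_add, add_neg_cancel, Real.exp_zero] at h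
    nlinarith [le_max_left (Real.exp x) 1]
  · rw [abs_of_nonpos (by linarith [Real.exp_le_one_iff.mpr hx]), abs_of_nonpos hx]
    nlinarith [le_max_right (Real.exp x) 1, Real.add_one_le_exp x]

section ExpTaylorNorm

variable {n r : ℕ} {f : (Fin n → ℝ) → ℝ}

lemma taylorNorm_exp_le (hf : ContDiff ℝ r f) (z : Fin n → ℝ) :
    taylorNorm r (fun w => Real.exp (f w)) z
      ≤ Real.exp (f z) * (1 + ∑ δ ∈ (taylorIndex n r).filter (· ≠ 0), taylorTerm f z δ) ^ r := by
  have h := sum_filter_deg_le_le_mul_pow (taylorTerm_nonneg _ z) (taylorTerm_nonneg f z)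
    (fun _ hα _ => mem_taylorIndex_of_le hα)
    (fun _ hα h0 => taylorTerm_exp_le hf z h0 (deg_le_of_mem_taylorIndex hα)) r
  rwa [filter_true_of_mem fun _ hα => deg_le_of_mem_taylorIndex hα, taylorTerm_zero,
    abs_of_pos (Real.exp_pos _)] at h

lemma sum_filter_ne_zero_taylorTerm_exp_le (hf : ContDiff ℝ r f) (z : Fin n → ℝ) :
    ∑ α ∈ (taylorIndex n r).filter (· ≠ 0), taylorTerm (fun w => Real.exp (f w)) z α
      ≤ taylorNorm r (fun w => Real.exp (f w)) z
        * ∑ δ ∈ (taylorIndex n r).filter (· ≠ 0), taylorTerm f z δ :=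
  sum_le_sum_mul_sum_of_le_sum_Iio (taylorTerm_nonneg _ z) (taylorTerm_nonneg f z)
    (fun _ hα _ => mem_taylorIndex_of_le hα) (filter_subset _ _)
    (fun _ hα _ hγ => mem_taylorIndex_of_le (mem_filter.mp hα).1 hγ.le)
    (fun _ hα => taylorTerm_exp_le hf z (mem_filter.mp hα).2
      (deg_le_of_mem_taylorIndex (mem_filter.mp hα).1))

end ExpTaylorNorm

theorem stmt1_general (n r0 : ℕ) (f : (Fin n → ℝ) → ℝ)
    (hf : ContDiff ℝ r0 f) (z : Fin n → ℝ) :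
    taylorNorm r0 (fun w => Real.exp (f w)) z
      ≤ Real.exp (f z) * (1 + taylorNorm r0 f z) ^ r0 ∧
    taylorNorm r0 (fun w => Real.exp (f w) - 1) z
      ≤ max (Real.exp (f z)) 1 * (1 + taylorNorm r0 f z) ^ r0 * taylorNorm r0 f z := by
  set B := ∑ δ ∈ (taylorIndex n r0).filter (· ≠ 0), taylorTerm f z δ
  have hT : taylorNorm r0 f z = |f z| + B := taylorNorm_eq_abs_add_sum r0 f z
  have hB : 0 ≤ B := sum_nonneg fun δ _ => taylorTerm_nonneg f z δ
  have hBT : (1 + B) ^ r0 ≤ (1 + taylorNorm r0 f z) ^ r0 := by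
    gcongr
    linarith [abs_nonneg (f z)]
  refine ⟨(taylorNorm_exp_le hf z).trans (by gcongr), ?_⟩
  set M := max (Real.exp (f z)) 1
  set P := (1 + taylorNorm r0 f z) ^ r0
  have hP : 1 ≤ P := one_le_pow₀ (by linarith [abs_nonneg (f z)])
  have hM : 0 ≤ M := zero_le_one.trans (le_max_right _ _)
  calc taylorNorm r0 (fun w => Real.exp (f w) - 1) z
      = |Real.exp (f z) - 1|
        + ∑ α ∈ (taylorIndex n r0).filter (· ≠ 0), taylorTerm (fun w => Real.exp (f w)) z α :=
        taylorNorm_sub_const _ _ _ _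
    _ ≤ M * |f z| + Real.exp (f z) * (1 + B) ^ r0 * B :=
        add_le_add (abs_exp_sub_one_le _)
          ((sum_filter_ne_zero_taylorTerm_exp_le hf z).trans (by gcongr; exact taylorNorm_exp_le hf z))
    _ ≤ M * P * |f z| + M * P * B := by
        gcongr
        · exact le_mul_of_one_le_right hM hP
        · exact le_max_left _ _
    _ = M * P * taylorNorm r0 f z := by rw [hT, mul_add]

/-- For every `f ∈ C^{r0}(ℝ^n, ℝ)` and every `z`:
`|e^f|_{T_z} ≤ e^{f(z)} (1 + |f|_{T_z})^{r0}` and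
`|e^f − 1|_{T_z} ≤ max(e^{f(z)}, 1) (1 + |f|_{T_z})^{r0} |f|_{T_z}`. -/
theorem stmt1 (n r0 : ℕ) (hn : 1 ≤ n) (hr0 : 1 ≤ r0) (f : (Fin n → ℝ) → ℝ)
    (hf : ContDiff ℝ r0 f) (z : Fin n → ℝ) :
    taylorNorm r0 (fun w => Real.exp (f w)) z
      ≤ Real.exp (f z) * (1 + taylorNorm r0 f z) ^ r0 ∧
    taylorNorm r0 (fun w => Real.exp (f w) - 1) z
      ≤ max (Real.exp (f z)) 1 * (1 + taylorNorm r0 f z) ^ r0 * taylorNorm r0 f z :=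
  stmt1_general n r0 f hf z
end

section
/- Let O ⊆ ℝ^k be open, r0 ≥ 1 an integer, ζ ∈ (0,1), and let Q : ℝ^n → ℝ be a positive definite quadratic form. Let h : O × ℝ^n → ℝ satisfy: (i) for every multiindex α with |α| ≤ r0 the partial derivative ∂_z^α h exists and is continuous on O × ℝ^n; (ii) lim_{|z|→∞} e^{−(1−ζ)Q(z)/2} sup_{F∈O} |h(F,·)|_{T_z} = 0. Then for every F ∈ O and every sequence F_k → F in O: lim_{k→∞} sup_{z∈ℝ^n} e^{−(1−ζ)Q(z)/2} |h(F_k,·) − h(F,·)|_{T_z} = 0. If, moreover, for each i ∈ {1,…,k} the partial derivative h_i := ∂h/∂F_i exists on O × ℝ^n and conditions (i) and (ii) hold with h_i in place of h, then for every F ∈ O and every i: lim_{η→0} |η|^{−1} sup_{z∈ℝ^n} e^{−(1−ζ)Q(z)/2} |h(F+ηe_i,·) − h(F,·) − η·h_i(F,·)|_{T_z} = 0. -/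
open scoped BigOperators

/-- Partial derivative in the coordinate direction `i` on `EuclideanSpace ℝ ι`. -/
noncomputable def epd {ι : Type} [Fintype ι] [DecidableEq ι] (i : ι)
    (f : EuclideanSpace ℝ ι → ℝ) : EuclideanSpace ℝ ι → ℝ :=
  fun z => fderiv ℝ f z (EuclideanSpace.single i 1)

/-- Iterated partial derivative in one coordinate direction. -/
noncomputable def epdPow {ι : Type} [Fintype ι] [DecidableEq ι] (i : ι) :
    ℕ → (EuclideanSpace ℝ ι → ℝ) → EuclideanSpace ℝ ι → ℝ
  | 0, f => f
  | k + 1, f => epd i (epdPow i k f)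

/-- Multiindex partial derivative `∂^α` on `EuclideanSpace ℝ ι`. -/
noncomputable def epdMulti {ι : Type} [Fintype ι] [DecidableEq ι] (α : ι → ℕ)
    (f : EuclideanSpace ℝ ι → ℝ) : EuclideanSpace ℝ ι → ℝ :=
  (Finset.univ : Finset ι).toList.foldr (fun i g => epdPow i (α i) g) f

/-- Multiindex factorial `α!`. -/
def emfact {ι : Type} [Fintype ι] (α : ι → ℕ) : ℕ := ∏ i, Nat.factorial (α i)

/-- The quadratic form `z ↦ D²U(0)(z,z)`. -/
noncomputable def equad0 {ι : Type} [Fintype ι] (U : EuclideanSpace ℝ ι → ℝ)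
    (z : EuclideanSpace ℝ ι) : ℝ :=
  fderiv ℝ (fderiv ℝ U) 0 z z

/-- Truncated Taylor norm `|f|_{T_z} = ∑_{|α| ≤ r0} |∂^α f(z)|/α!` on `EuclideanSpace ℝ ι`. -/
noncomputable def etaylorNorm {ι : Type} [Fintype ι] [DecidableEq ι] (r0 : ℕ)
    (f : EuclideanSpace ℝ ι → ℝ) (z : EuclideanSpace ℝ ι) : ℝ :=
  ∑ α ∈ (Finset.Iic (fun _ : ι => r0)).filter (fun α => ∑ i, α i ≤ r0),
    |epdMulti α f z| / ((emfact α : ℕ) : ℝ)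

/-- Conditions (i) and (ii) on a parameter-dependent family `h(F, ·)`:  existence and joint
continuity of the `z`-derivatives up to order `r0` on `O × ℝ^n`, and uniform decay of the
weighted Taylor norm as `|z| → ∞`. -/
def GoodFamily (k n r0 : ℕ) (ζ : ℝ) (O : Set (Fin k → ℝ))
    (Q : EuclideanSpace ℝ (Fin n) → ℝ)
    (h : (Fin k → ℝ) → EuclideanSpace ℝ (Fin n) → ℝ) : Prop :=
  (∀ F ∈ O, ∀ α : Fin n → ℕ, (∑ i, α i) < r0 →
      ∀ z : EuclideanSpace ℝ (Fin n), DifferentiableAt ℝ (epdMulti α (h F)) z) ∧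
  (∀ α : Fin n → ℕ, (∑ i, α i) ≤ r0 →
      ContinuousOn
        (fun p : (Fin k → ℝ) × EuclideanSpace ℝ (Fin n) => epdMulti α (h p.1) p.2)
        (O ×ˢ (Set.univ : Set (EuclideanSpace ℝ (Fin n))))) ∧
  (∀ ε : ℝ, 0 < ε → ∃ R : ℝ, ∀ z : EuclideanSpace ℝ (Fin n), R ≤ ‖z‖ → ∀ F ∈ O,
      Real.exp (-((1 - ζ) * Q z) / 2) * etaylorNorm r0 (h F) z ≤ ε)

/-!
Both parts rest on one estimate for a family satisfying (i) and (ii): for `F'` close to `F`,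
uniformly in `z` and in `|α| ≤ r0`,
`e^{-(1-ζ)Q(z)/2} |∂^α h(F',z) - ∂^α h(F,z)| ≤ α! ε`.
Outside a large ball both terms are small by (ii); on the ball the weight is at most `1`
(as `Q ≥ 0`) and `∂^α h(·,z)` is continuous at `F` uniformly in `z` (tube lemma).

For the derivative, the fundamental theorem of calculus along `t ↦ F + t e` and differentiation
under the integral sign give
`∂^α (h(F+ηe) - h(F) - η h_e(F)) = ∫₀^η (∂^α h_e(F+te) - ∂^α h_e(F)) dt`,
and the estimate for `h_e` bounds the integrand by `α! ε` times the inverse weight.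

As `∂^α` is a composition of `|α|` first-order partial derivatives, linearity of `∂^α` and
differentiation under the integral sign follow by induction on `|α|`, using only the
differentiability of the lower-order derivatives granted by (i).
-/

open Filter Topology Set

theorem hasLineDerivAt_intervalIntegral {E : Type*} [NormedAddCommGroup E] [NormedSpace ℝ E]
    {φ : ℝ → E → ℝ} {a b : ℝ} {z v : E}
    (hφ : ContinuousOn (fun p : ℝ × E => φ p.1 p.2) (uIcc a b ×ˢ univ))
    (hφ' : ContinuousOn (fun p : ℝ × E => fderiv ℝ (φ p.1) p.2 v) (uIcc a b ×ˢ univ))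
    (hd : ∀ t ∈ uIcc a b, Differentiable ℝ (φ t)) :
    HasLineDerivAt ℝ (fun z => ∫ t in a..b, φ t z) (∫ t in a..b, fderiv ℝ (φ t) z v) z v := by
  have hline : Continuous fun p : ℝ × ℝ => (p.1, z + p.2 • v) := by fun_prop
  have hmaps : MapsTo (fun p : ℝ × ℝ => (p.1, z + p.2 • v)) (uIcc a b ×ˢ univ)
      (uIcc a b ×ˢ univ) := fun p hp => ⟨hp.1, trivial⟩
  have hψ := hφ.comp hline.continuousOn hmaps
  have hψ' := hφ'.comp hline.continuousOn hmaps
  have hslice : ∀ x : ℝ, MapsTo (fun t : ℝ => (t, x)) (uIcc a b) (uIcc a b ×ˢ univ) :=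
    fun x t ht => ⟨ht, trivial⟩
  obtain ⟨C, hC⟩ := (isCompact_uIcc.prod (isCompact_closedBall (0 : ℝ) 1))
    |>.exists_bound_of_continuousOn (hψ'.mono (prod_mono subset_rfl (subset_univ _)))
  have key := intervalIntegral.hasDerivAt_integral_of_dominated_loc_of_deriv_le
    (F := fun x t => φ t (z + x • v)) (F' := fun x t => fderiv ℝ (φ t) (z + x • v) v)
    (μ := MeasureTheory.volume) (bound := fun _ => C) (Metric.ball_mem_nhds (0 : ℝ) one_pos)
    (Eventually.of_forall fun x =>
      ((hψ.comp (by fun_prop) (hslice x)).mono uIoc_subset_uIcc).aestronglyMeasurable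
        measurableSet_uIoc)
    (hψ.comp (by fun_prop) (hslice 0)).intervalIntegrable
    (((hψ'.comp (by fun_prop) (hslice 0)).mono uIoc_subset_uIcc).aestronglyMeasurable
        measurableSet_uIoc)
    (Eventually.of_forall fun t ht x hx =>
      hC (t, x) ⟨uIoc_subset_uIcc ht, Metric.ball_subset_closedBall hx⟩)
    intervalIntegrable_const
    (Eventually.of_forall fun t ht x _ => by
      have := (hd t (uIoc_subset_uIcc ht) (z + x • v)).hasFDerivAt.comp_hasDerivAt x
        (((hasDerivAt_id x).smul_const v).const_add z)
      simpa [Function.comp_def] using this)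
  simpa [HasLineDerivAt] using key.2

section PartialDerivatives

variable {ι : Type} [Fintype ι] [DecidableEq ι]

theorem epd_sub {f g : EuclideanSpace ℝ ι → ℝ} (hf : Differentiable ℝ f)
    (hg : Differentiable ℝ g) (i : ι) : epd i (f - g) = epd i f - epd i g := by
  ext z
  simp [epd, fderiv_sub (hf z) (hg z)]

theorem epd_const_smul (c : ℝ) (f : EuclideanSpace ℝ ι → ℝ) (i : ι) :
    epd i (c • f) = c • epd i f := by
  ext z
  simp [epd, fderiv_const_smul_field]

theorem foldr_epdPow_congr {L : List ι} {α β : ι → ℕ} (h : ∀ i ∈ L, α i = β i)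
    (f : EuclideanSpace ℝ ι → ℝ) :
    L.foldr (fun i g => epdPow i (α i) g) f = L.foldr (fun i g => epdPow i (β i) g) f := by
  induction L with
  | nil => rfl
  | cons i L ih =>
    simp only [List.foldr_cons, h i (by simp), ih fun j hj => h j (by simp [hj])]

theorem exists_foldr_epdPow_eq_epd {L : List ι} (hL : L.Nodup) {α : ι → ℕ}
    (hα : ∃ j ∈ L, α j ≠ 0) :
    ∃ j, α j ≠ 0 ∧ ∀ f : EuclideanSpace ℝ ι → ℝ,
      L.foldr (fun i g => epdPow i (α i) g) f =
        epd j (L.foldr (fun i g => epdPow i (Function.update α j (α j - 1) i) g) f) := by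
  induction L with
  | nil => simp at hα
  | cons i L ih =>
    obtain ⟨hiL, hL⟩ := List.nodup_cons.1 hL
    have hupd : ∀ j m, j ∉ L → ∀ f : EuclideanSpace ℝ ι → ℝ,
        L.foldr (fun i g => epdPow i (Function.update α j m i) g) f =
          L.foldr (fun i g => epdPow i (α i) g) f :=
      fun j m hj => foldr_epdPow_congr fun l hl =>
        Function.update_of_ne (by rintro rfl; exact hj hl) _ _
    rcases hαi : α i with _ | m
    · obtain ⟨j, hjL, hj⟩ : ∃ j ∈ L, α j ≠ 0 := by
        obtain ⟨j, hj, hj0⟩ := hα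
        rcases List.mem_cons.1 hj with rfl | hj
        · exact absurd hαi hj0
        · exact ⟨j, hj, hj0⟩
      obtain ⟨j, hj, hfold⟩ := ih hL ⟨j, hjL, hj⟩
      have hji : i ≠ j := by rintro rfl; exact hj hαi
      refine ⟨j, hj, fun f => ?_⟩
      simp only [List.foldr_cons, Function.update_of_ne hji, hαi]
      exact hfold f
    · refine ⟨i, by simp [hαi], fun f => ?_⟩
      simp only [List.foldr_cons, Function.update_self, hαi, hupd i _ hiL]
      rfl

theorem epdMulti_zero (f : EuclideanSpace ℝ ι → ℝ) : epdMulti 0 f = f := by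
  simp only [epdMulti, Pi.zero_apply]
  induction (Finset.univ : Finset ι).toList with
  | nil => rfl
  | cons i L ih => exact ih

theorem epdMulti_of_sum_eq_zero {α : ι → ℕ} (hα : ∑ i, α i = 0)
    (f : EuclideanSpace ℝ ι → ℝ) : epdMulti α f = f := by
  obtain rfl : α = 0 := funext fun i => Finset.sum_eq_zero_iff.1 hα i (Finset.mem_univ i)
  exact epdMulti_zero f

theorem exists_epdMulti_eq_epd {α : ι → ℕ} {m : ℕ} (hα : ∑ i, α i = m + 1) :
    ∃ j, ∃ β : ι → ℕ, ∑ i, β i = m ∧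
      ∀ f : EuclideanSpace ℝ ι → ℝ, epdMulti α f = epd j (epdMulti β f) := by
  obtain ⟨j, -, hj⟩ := Finset.exists_ne_zero_of_sum_ne_zero (hα.trans_ne m.succ_ne_zero)
  obtain ⟨j, hj, hfold⟩ := exists_foldr_epdPow_eq_epd (Finset.nodup_toList Finset.univ)
    ⟨j, Finset.mem_toList.2 (Finset.mem_univ j), hj⟩
  refine ⟨j, _, ?_, hfold⟩
  have hupd := Finset.sum_update_of_mem (Finset.mem_univ j) α (α j - 1)
  have hsum := Finset.add_sum_erase Finset.univ α (Finset.mem_univ j)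
  rw [Finset.sdiff_singleton_eq_erase] at hupd
  omega

def PartialsDifferentiable (r : ℕ) (f : EuclideanSpace ℝ ι → ℝ) : Prop :=
  ∀ β : ι → ℕ, ∑ i, β i < r → Differentiable ℝ (epdMulti β f)

theorem epdMulti_sub {r : ℕ} {f g : EuclideanSpace ℝ ι → ℝ} (hf : PartialsDifferentiable r f)
    (hg : PartialsDifferentiable r g) {α : ι → ℕ} (hα : ∑ i, α i ≤ r) :
    epdMulti α (f - g) = epdMulti α f - epdMulti α g := by
  obtain ⟨m, hm⟩ : ∃ m, ∑ i, α i = m := ⟨_, rfl⟩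
  induction m generalizing α with
  | zero => simp only [epdMulti_of_sum_eq_zero hm]
  | succ m ih =>
    obtain ⟨j, β, hβ, hαβ⟩ := exists_epdMulti_eq_epd hm
    have hβr : ∑ i, β i < r := by omega
    rw [hαβ, hαβ, hαβ, ih hβr.le hβ, epd_sub (hf β hβr) (hg β hβr)]

theorem epdMulti_const_smul (c : ℝ) (f : EuclideanSpace ℝ ι → ℝ) (α : ι → ℕ) :
    epdMulti α (c • f) = c • epdMulti α f := by
  obtain ⟨m, hm⟩ : ∃ m, ∑ i, α i = m := ⟨_, rfl⟩
  induction m generalizing α with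
  | zero => simp only [epdMulti_of_sum_eq_zero hm]
  | succ m ih =>
    obtain ⟨j, β, hβ, hαβ⟩ := exists_epdMulti_eq_epd hm
    rw [hαβ, hαβ, ih _ hβ, epd_const_smul]

theorem PartialsDifferentiable.sub {r : ℕ} {f g : EuclideanSpace ℝ ι → ℝ}
    (hf : PartialsDifferentiable r f) (hg : PartialsDifferentiable r g) :
    PartialsDifferentiable r (f - g) := fun β hβ => by
  rw [epdMulti_sub hf hg hβ.le]
  exact (hf β hβ).sub (hg β hβ)

theorem PartialsDifferentiable.const_smul {r : ℕ} {f : EuclideanSpace ℝ ι → ℝ}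
    (hf : PartialsDifferentiable r f) (c : ℝ) : PartialsDifferentiable r (c • f) := fun β hβ => by
  rw [epdMulti_const_smul]
  exact (hf β hβ).const_smul c

theorem epd_intervalIntegral {φ : ℝ → EuclideanSpace ℝ ι → ℝ} {a b : ℝ} (i : ι)
    (hφ : ContinuousOn (fun p : ℝ × EuclideanSpace ℝ ι => φ p.1 p.2) (uIcc a b ×ˢ univ))
    (hφ' : ContinuousOn (fun p : ℝ × EuclideanSpace ℝ ι => epd i (φ p.1) p.2)
      (uIcc a b ×ˢ univ))
    (hd : ∀ t ∈ uIcc a b, Differentiable ℝ (φ t))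
    (hu : Differentiable ℝ fun z => ∫ t in a..b, φ t z) :
    epd i (fun z => ∫ t in a..b, φ t z) = fun z => ∫ t in a..b, epd i (φ t) z :=
  funext fun z => ((hu z).hasFDerivAt.hasLineDerivAt _).unique
    (hasLineDerivAt_intervalIntegral hφ hφ' hd)

theorem epdMulti_intervalIntegral {r : ℕ} {φ : ℝ → EuclideanSpace ℝ ι → ℝ} {a b : ℝ}
    (hφ : ∀ β : ι → ℕ, ∑ i, β i ≤ r →
      ContinuousOn (fun p : ℝ × EuclideanSpace ℝ ι => epdMulti β (φ p.1) p.2) (uIcc a b ×ˢ univ))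
    (hd : ∀ t ∈ uIcc a b, PartialsDifferentiable r (φ t))
    (hu : PartialsDifferentiable r fun z => ∫ t in a..b, φ t z)
    {α : ι → ℕ} (hα : ∑ i, α i ≤ r) :
    epdMulti α (fun z => ∫ t in a..b, φ t z) = fun z => ∫ t in a..b, epdMulti α (φ t) z := by
  obtain ⟨m, hm⟩ : ∃ m, ∑ i, α i = m := ⟨_, rfl⟩
  induction m generalizing α with
  | zero => simp only [epdMulti_of_sum_eq_zero hm]
  | succ m ih =>
    obtain ⟨j, β, hβ, hαβ⟩ := exists_epdMulti_eq_epd hm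
    have hβr : ∑ i, β i < r := by omega
    have hint := ih hβr.le hβ
    have hu' := hu β hβr
    rw [hint] at hu'
    simp only [hαβ]
    rw [hint]
    exact epd_intervalIntegral j (hφ β hβr.le) (by simpa only [hαβ] using hφ α hα)
      (fun t ht => hd t ht β hβr) hu'

end PartialDerivatives

section TaylorNorm

variable {ι : Type} [Fintype ι]

theorem one_le_emfact (α : ι → ℕ) : (1 : ℝ) ≤ emfact α := by
  exact_mod_cast Finset.one_le_prod' fun i _ => Nat.one_le_iff_ne_zero.2 (Nat.factorial_ne_zero _)

variable [DecidableEq ι]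

def taylorIndices (ι : Type) [Fintype ι] [DecidableEq ι] (r : ℕ) : Finset (ι → ℕ) :=
  (Finset.Iic fun _ => r).filter fun α => ∑ i, α i ≤ r

theorem mem_taylorIndices {r : ℕ} {α : ι → ℕ} : α ∈ taylorIndices ι r ↔ ∑ i, α i ≤ r := by
  refine ⟨fun h => (Finset.mem_filter.1 h).2, fun h => Finset.mem_filter.2 ⟨?_, h⟩⟩
  exact Finset.mem_Iic.2 fun i => (Finset.single_le_sum (by simp) (Finset.mem_univ i)).trans h

theorem abs_epdMulti_le_mul_etaylorNorm {r : ℕ} {α : ι → ℕ} (hα : ∑ i, α i ≤ r)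
    (f : EuclideanSpace ℝ ι → ℝ) (z : EuclideanSpace ℝ ι) :
    |epdMulti α f z| ≤ emfact α * etaylorNorm r f z := by
  rw [← div_le_iff₀' (by linarith [one_le_emfact α])]
  exact Finset.single_le_sum (f := fun β => |epdMulti β f z| / (emfact β : ℝ))
    (fun β _ => by positivity) (mem_taylorIndices.2 hα)

theorem mul_etaylorNorm_le {r : ℕ} {f : EuclideanSpace ℝ ι → ℝ} {z : EuclideanSpace ℝ ι}
    {a c : ℝ} (h : ∀ α : ι → ℕ, ∑ i, α i ≤ r → a * |epdMulti α f z| ≤ emfact α * c) :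
    a * etaylorNorm r f z ≤ (taylorIndices ι r).card * c := by
  rw [etaylorNorm, Finset.mul_sum, ← nsmul_eq_mul, ← Finset.sum_const]
  refine Finset.sum_le_sum fun α hα => ?_
  rw [mul_div_assoc', div_le_iff₀' (by linarith [one_le_emfact α])]
  exact h α (mem_taylorIndices.1 hα)

end TaylorNorm

theorem ContinuousOn.eventually_forall_dist_lt {X Y Z : Type*} [TopologicalSpace X]
    [TopologicalSpace Y] [PseudoMetricSpace Z] {f : X × Y → Z} {U : Set X} {x : X}
    (hf : ContinuousOn f (U ×ˢ univ)) (hU : U ∈ 𝓝 x) {K : Set Y} (hK : IsCompact K)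
    {ε : ℝ} (hε : 0 < ε) : ∀ᶠ x' in 𝓝 x, ∀ y ∈ K, dist (f (x', y)) (f (x, y)) < ε := by
  refine hK.eventually_forall_of_forall_eventually fun y _ => ?_
  have hcont : ContinuousAt f (x, y) := hf.continuousAt (prod_mem_nhds hU univ_mem)
  have hslice : Tendsto (fun p : X × Y => f (x, p.2)) (𝓝 (x, y)) (𝓝 (f (x, y))) :=
    hcont.tendsto.comp (Continuous.tendsto (by fun_prop) (x, y))
  simpa using (hcont.tendsto.dist hslice).eventually (gt_mem_nhds (by simpa using hε))

theorem exp_neg_mul_div_two_le_one {ζ q : ℝ} (hζ : ζ < 1) (hq : 0 ≤ q) :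
    Real.exp (-((1 - ζ) * q) / 2) ≤ 1 := by
  rw [Real.exp_le_one_iff]
  nlinarith

theorem mul_div_add_one_le {m ε : ℝ} (hm : 0 ≤ m) (hε : 0 ≤ ε) : m * (ε / (m + 1)) ≤ ε := by
  rw [mul_div_assoc', div_le_iff₀ (by positivity)]
  nlinarith

theorem HasDerivAt.of_comp_add_smul {V : Type*} [AddCommGroup V] [Module ℝ V] {f : V → ℝ}
    {f' : ℝ} {F e : V} {t : ℝ} (hf : HasDerivAt (fun s : ℝ => f (F + t • e + s • e)) f' 0) :
    HasDerivAt (fun s : ℝ => f (F + s • e)) f' t := by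
  have := (show HasDerivAt (fun s : ℝ => f (F + t • e + s • e)) f' (t - t) by
    rwa [sub_self]).comp_sub_const t t
  have hline : (fun s : ℝ => f (F + t • e + (s - t) • e)) = fun s => f (F + s • e) := by
    funext s
    rw [add_assoc, ← add_smul, add_sub_cancel]
  rwa [hline] at this

namespace GoodFamily

variable {k n r0 : ℕ} {ζ : ℝ} {O : Set (Fin k → ℝ)} {Q : EuclideanSpace ℝ (Fin n) → ℝ}
  {h g : (Fin k → ℝ) → EuclideanSpace ℝ (Fin n) → ℝ}

theorem partialsDifferentiable (hh : GoodFamily k n r0 ζ O Q h) {F : Fin k → ℝ} (hF : F ∈ O) :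
    PartialsDifferentiable r0 (h F) :=
  hh.1 F hF

theorem eventually_mul_abs_epdMulti_sub_le (hh : GoodFamily k n r0 ζ O Q h) (hO : IsOpen O)
    (hζ : ζ < 1) (hQ : ∀ z, 0 ≤ Q z) {F : Fin k → ℝ} (hF : F ∈ O) {ε : ℝ} (hε : 0 < ε) :
    ∀ᶠ F' in 𝓝 F, ∀ α : Fin n → ℕ, ∑ i, α i ≤ r0 → ∀ z,
      Real.exp (-((1 - ζ) * Q z) / 2) * |epdMulti α (h F') z - epdMulti α (h F) z|
        ≤ emfact α * ε := by
  obtain ⟨R, hR⟩ := hh.2.2 (ε / 2) (half_pos hε)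
  have hnear : ∀ᶠ F' in 𝓝 F, ∀ α ∈ taylorIndices (Fin n) r0, ∀ z ∈ Metric.closedBall 0 R,
      dist (epdMulti α (h F') z) (epdMulti α (h F) z) < ε :=
    (Filter.eventually_all_finset _).2 fun α hα =>
      (hh.2.1 α (mem_taylorIndices.1 hα)).eventually_forall_dist_lt (hO.mem_nhds hF)
        (isCompact_closedBall 0 R) hε
  filter_upwards [hnear, hO.mem_nhds hF] with F' hnear hF' α hα z
  set w := Real.exp (-((1 - ζ) * Q z) / 2)
  have hw : 0 ≤ w := (Real.exp_pos _).le
  rcases le_or_gt R ‖z‖ with hfar | hz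
  · calc w * |epdMulti α (h F') z - epdMulti α (h F) z|
        ≤ w * |epdMulti α (h F') z| + w * |epdMulti α (h F) z| := by
          rw [← mul_add]; exact mul_le_mul_of_nonneg_left (abs_sub _ _) hw
      _ ≤ w * (emfact α * etaylorNorm r0 (h F') z) + w * (emfact α * etaylorNorm r0 (h F) z) := by
          gcongr <;> exact abs_epdMulti_le_mul_etaylorNorm hα _ z
      _ = emfact α * (w * etaylorNorm r0 (h F') z) + emfact α * (w * etaylorNorm r0 (h F) z) := by
          ring
      _ ≤ emfact α * (ε / 2) + emfact α * (ε / 2) := by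
          gcongr
          · exact hR z hfar F' hF'
          · exact hR z hfar F hF
      _ = emfact α * ε := by ring
  · have hdist := hnear α (mem_taylorIndices.2 hα) z (by simpa using hz.le)
    rw [Real.dist_eq] at hdist
    calc w * |epdMulti α (h F') z - epdMulti α (h F) z| ≤ 1 * ε :=
          mul_le_mul (exp_neg_mul_div_two_le_one hζ (hQ z)) hdist.le (abs_nonneg _) zero_le_one
      _ ≤ emfact α * ε := by gcongr; exact one_le_emfact α

theorem eventually_mul_etaylorNorm_sub_le (hh : GoodFamily k n r0 ζ O Q h) (hO : IsOpen O)
    (hζ : ζ < 1) (hQ : ∀ z, 0 ≤ Q z) {F : Fin k → ℝ} (hF : F ∈ O) {ε : ℝ} (hε : 0 < ε) :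
    ∀ᶠ F' in 𝓝 F, ∀ z,
      Real.exp (-((1 - ζ) * Q z) / 2) * etaylorNorm r0 (h F' - h F) z ≤ ε := by
  set N : ℝ := ((taylorIndices (Fin n) r0).card : ℝ)
  filter_upwards [hh.eventually_mul_abs_epdMulti_sub_le hO hζ hQ hF (ε := ε / (N + 1))
    (by positivity), hO.mem_nhds hF] with F' hF'F hF' z
  calc _ ≤ N * (ε / (N + 1)) := mul_etaylorNorm_le fun α hα => by
        rw [epdMulti_sub (hh.partialsDifferentiable hF') (hh.partialsDifferentiable hF) hα]
        exact hF'F α hα z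
    _ ≤ ε := mul_div_add_one_le (by positivity) hε.le

theorem continuousOn_epdMulti_segment (hg : GoodFamily k n r0 ζ O Q g) {F e : Fin k → ℝ}
    {s : Set ℝ} (hseg : ∀ t ∈ s, F + t • e ∈ O) {β : Fin n → ℕ} (hβ : ∑ i, β i ≤ r0) :
    ContinuousOn (fun p : ℝ × EuclideanSpace ℝ (Fin n) => epdMulti β (g (F + p.1 • e)) p.2)
      (s ×ˢ univ) :=
  (hg.2.1 β hβ).comp
    (Continuous.continuousOn (f := fun p : ℝ × EuclideanSpace ℝ (Fin n) => (F + p.1 • e, p.2))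
      (by fun_prop))
    fun p hp => ⟨hseg p.1 hp.1, trivial⟩

theorem continuousOn_epdMulti_segment_apply (hg : GoodFamily k n r0 ζ O Q g)
    {F e : Fin k → ℝ} {s : Set ℝ} (hseg : ∀ t ∈ s, F + t • e ∈ O) {β : Fin n → ℕ}
    (hβ : ∑ i, β i ≤ r0) (z : EuclideanSpace ℝ (Fin n)) :
    ContinuousOn (fun t => epdMulti β (g (F + t • e)) z) s :=
  (hg.continuousOn_epdMulti_segment hseg hβ).comp
    (Continuous.continuousOn (f := fun t : ℝ => (t, z)) (by fun_prop))
    fun _ ht => ⟨ht, trivial⟩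

theorem epdMulti_sub_eq_intervalIntegral (hh : GoodFamily k n r0 ζ O Q h)
    (hg : GoodFamily k n r0 ζ O Q g) {e : Fin k → ℝ}
    (hder : ∀ G ∈ O, ∀ z, HasDerivAt (fun t : ℝ => h (G + t • e) z) (g G z) 0)
    {F : Fin k → ℝ} {η : ℝ} (hseg : ∀ t ∈ uIcc 0 η, F + t • e ∈ O)
    {α : Fin n → ℕ} (hα : ∑ i, α i ≤ r0) :
    epdMulti α (h (F + η • e) - h F) =
      fun z => ∫ t in (0 : ℝ)..η, epdMulti α (g (F + t • e)) z := by
  have hFTC : h (F + η • e) - h F = fun z => ∫ t in (0 : ℝ)..η, g (F + t • e) z := by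
    ext z
    have hslice := hg.continuousOn_epdMulti_segment_apply hseg (β := 0) (by simp) z
    simp only [epdMulti_zero] at hslice
    rw [intervalIntegral.integral_eq_sub_of_hasDerivAt
      (fun t ht => HasDerivAt.of_comp_add_smul (f := (h · z)) (hder _ (hseg t ht) z))
      hslice.intervalIntegrable]
    simp
  rw [hFTC]
  refine epdMulti_intervalIntegral (fun β hβ => hg.continuousOn_epdMulti_segment hseg hβ)
    (fun t ht => hg.partialsDifferentiable (hseg t ht)) ?_ hα
  rw [← hFTC]
  exact (hh.partialsDifferentiable (hseg η right_mem_uIcc)).sub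
    (hh.partialsDifferentiable (by simpa using hseg 0 left_mem_uIcc))

theorem epdMulti_sub_sub_smul_eq_intervalIntegral (hh : GoodFamily k n r0 ζ O Q h)
    (hg : GoodFamily k n r0 ζ O Q g) {e : Fin k → ℝ}
    (hder : ∀ G ∈ O, ∀ z, HasDerivAt (fun t : ℝ => h (G + t • e) z) (g G z) 0)
    {F : Fin k → ℝ} {η : ℝ} (hseg : ∀ t ∈ uIcc 0 η, F + t • e ∈ O)
    {α : Fin n → ℕ} (hα : ∑ i, α i ≤ r0) (z : EuclideanSpace ℝ (Fin n)) :
    epdMulti α (h (F + η • e) - h F - η • g F) z =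
      ∫ t in (0 : ℝ)..η, (epdMulti α (g (F + t • e)) z - epdMulti α (g F) z) := by
  have hF : F ∈ O := by simpa using hseg 0 left_mem_uIcc
  have hconst : ∫ _ in (0 : ℝ)..η, epdMulti α (g F) z = η * epdMulti α (g F) z := by simp
  rw [epdMulti_sub ((hh.partialsDifferentiable (hseg η right_mem_uIcc)).sub
      (hh.partialsDifferentiable hF)) ((hg.partialsDifferentiable hF).const_smul η) hα,
    epdMulti_sub_eq_intervalIntegral hh hg hder hseg hα, epdMulti_const_smul, Pi.sub_apply,
    Pi.smul_apply, smul_eq_mul, ← hconst, ← intervalIntegral.integral_sub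
      ((hg.continuousOn_epdMulti_segment_apply hseg hα z).intervalIntegrable)
      intervalIntegrable_const]

theorem eventually_mul_etaylorNorm_sub_sub_smul_le (hh : GoodFamily k n r0 ζ O Q h)
    (hg : GoodFamily k n r0 ζ O Q g) {e : Fin k → ℝ}
    (hder : ∀ F ∈ O, ∀ z, HasDerivAt (fun t : ℝ => h (F + t • e) z) (g F z) 0)
    (hO : IsOpen O) (hζ : ζ < 1) (hQ : ∀ z, 0 ≤ Q z) {F : Fin k → ℝ} (hF : F ∈ O)
    {ε : ℝ} (hε : 0 < ε) :
    ∀ᶠ η in 𝓝 (0 : ℝ), ∀ z, Real.exp (-((1 - ζ) * Q z) / 2) *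
      etaylorNorm r0 (h (F + η • e) - h F - η • g F) z ≤ ε * |η| := by
  set N : ℝ := ((taylorIndices (Fin n) r0).card : ℝ)
  have hline : Tendsto (fun t : ℝ => F + t • e) (𝓝 0) (𝓝 F) := by
    simpa using (Continuous.tendsto (f := fun t : ℝ => F + t • e) (by fun_prop) 0)
  obtain ⟨δ, hδ, hball⟩ := Metric.eventually_nhds_iff.1 (hline.eventually
    ((hg.eventually_mul_abs_epdMulti_sub_le hO hζ hQ hF (ε := ε / (N + 1)) (by positivity)).and
      (hO.mem_nhds hF)))
  filter_upwards [Metric.ball_mem_nhds (0 : ℝ) hδ] with η hη z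
  have hsmall : ∀ t ∈ uIcc 0 η, dist t 0 < δ := fun t ht => by
    simpa using (abs_sub_left_of_mem_uIcc ht).trans_lt (by simpa using hη)
  have hseg : ∀ t ∈ uIcc 0 η, F + t • e ∈ O := fun t ht => (hball (hsmall t ht)).2
  have hw : 0 < Real.exp (-((1 - ζ) * Q z) / 2) := Real.exp_pos _
  refine (mul_etaylorNorm_le (c := ε / (N + 1) * |η|) fun α hα => ?_).trans ?_
  · rw [hh.epdMulti_sub_sub_smul_eq_intervalIntegral hg hder hseg hα z]
    calc _ = ‖∫ t in (0 : ℝ)..η, Real.exp (-((1 - ζ) * Q z) / 2) *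
          (epdMulti α (g (F + t • e)) z - epdMulti α (g F) z)‖ := by
          rw [intervalIntegral.integral_const_mul, Real.norm_eq_abs, abs_mul, abs_of_pos hw]
      _ ≤ emfact α * (ε / (N + 1)) * |η - 0| :=
          intervalIntegral.norm_integral_le_of_norm_le_const fun t ht => by
            rw [Real.norm_eq_abs, abs_mul, abs_of_pos hw]
            exact (hball (hsmall t (uIoc_subset_uIcc ht))).1 α hα z
      _ = emfact α * (ε / (N + 1) * |η|) := by rw [sub_zero, mul_assoc]
  · rw [← mul_assoc]
    exact mul_le_mul_of_nonneg_right (mul_div_add_one_le (by positivity) hε.le) (abs_nonneg η)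

end GoodFamily

theorem stmt6_general (k n r0 : ℕ) (ζ : ℝ) (hζ1 : ζ < 1)
    (O : Set (Fin k → ℝ)) (hO : IsOpen O)
    (Q : EuclideanSpace ℝ (Fin n) → ℝ)
    (B : EuclideanSpace ℝ (Fin n) →ₗ[ℝ] EuclideanSpace ℝ (Fin n) →ₗ[ℝ] ℝ)
    (hQB : ∀ z, Q z = B z z)
    (hQpos : ∀ z : EuclideanSpace ℝ (Fin n), z ≠ 0 → 0 < Q z)
    (h : (Fin k → ℝ) → EuclideanSpace ℝ (Fin n) → ℝ)
    (hgood : GoodFamily k n r0 ζ O Q h) :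
    (∀ F ∈ O, ∀ Fseq : ℕ → (Fin k → ℝ), (∀ j, Fseq j ∈ O) →
        Filter.Tendsto Fseq Filter.atTop (nhds F) →
        ∀ ε : ℝ, 0 < ε → ∃ J : ℕ, ∀ j : ℕ, J ≤ j →
          ∀ z : EuclideanSpace ℝ (Fin n),
            Real.exp (-((1 - ζ) * Q z) / 2) *
                etaylorNorm r0 (fun w => h (Fseq j) w - h F w) z ≤ ε) ∧
    (∀ hi : Fin k → (Fin k → ℝ) → EuclideanSpace ℝ (Fin n) → ℝ,
        (∀ i : Fin k, ∀ F ∈ O, ∀ z : EuclideanSpace ℝ (Fin n),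
          HasDerivAt (fun t : ℝ => h (F + t • (Pi.single i 1 : Fin k → ℝ)) z) (hi i F z) 0) →
        (∀ i : Fin k, GoodFamily k n r0 ζ O Q (hi i)) →
        ∀ F ∈ O, ∀ i : Fin k, ∀ ε : ℝ, 0 < ε → ∃ δ : ℝ, 0 < δ ∧
          ∀ η : ℝ, η ≠ 0 → |η| < δ →
            ∀ z : EuclideanSpace ℝ (Fin n),
              Real.exp (-((1 - ζ) * Q z) / 2) *
                  etaylorNorm r0
                    (fun w => h (F + η • (Pi.single i 1 : Fin k → ℝ)) w - h F w - η * hi i F w) z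
                ≤ ε * |η|) := by
  have hQ : ∀ z, 0 ≤ Q z := fun z => by
    rcases eq_or_ne z 0 with rfl | hz
    · simp [hQB]
    · exact (hQpos z hz).le
  refine ⟨fun F hF Fseq _ hlim ε hε => ?_, fun hi hder hgoodi F hF i ε hε => ?_⟩
  · exact eventually_atTop.1
      (hlim.eventually (hgood.eventually_mul_etaylorNorm_sub_le hO hζ1 hQ hF hε))
  · obtain ⟨δ, hδ, hball⟩ := Metric.eventually_nhds_iff.1
      (hgood.eventually_mul_etaylorNorm_sub_sub_smul_le (hgoodi i) (hder i) hO hζ1 hQ hF hε)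
    exact ⟨δ, hδ, fun η _ hη => hball (by simpa using hη)⟩

/-- Continuity, and differentiability, in the parameter `F` of `F ↦ h(F,·)` in the weighted
Taylor-norm topology, given conditions (i) and (ii) for `h` and for its partial derivatives. -/
theorem stmt6 (k n r0 : ℕ) (hn : 1 ≤ n) (hr0 : 1 ≤ r0) (ζ : ℝ)
    (hζ0 : 0 < ζ) (hζ1 : ζ < 1)
    (O : Set (Fin k → ℝ)) (hO : IsOpen O)
    (Q : EuclideanSpace ℝ (Fin n) → ℝ)
    (B : EuclideanSpace ℝ (Fin n) →ₗ[ℝ] EuclideanSpace ℝ (Fin n) →ₗ[ℝ] ℝ)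
    (hBsymm : ∀ z w, B z w = B w z) (hQB : ∀ z, Q z = B z z)
    (hQpos : ∀ z : EuclideanSpace ℝ (Fin n), z ≠ 0 → 0 < Q z)
    (h : (Fin k → ℝ) → EuclideanSpace ℝ (Fin n) → ℝ)
    (hgood : GoodFamily k n r0 ζ O Q h) :
    (∀ F ∈ O, ∀ Fseq : ℕ → (Fin k → ℝ), (∀ j, Fseq j ∈ O) →
        Filter.Tendsto Fseq Filter.atTop (nhds F) →
        ∀ ε : ℝ, 0 < ε → ∃ J : ℕ, ∀ j : ℕ, J ≤ j →
          ∀ z : EuclideanSpace ℝ (Fin n),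
            Real.exp (-((1 - ζ) * Q z) / 2) *
                etaylorNorm r0 (fun w => h (Fseq j) w - h F w) z ≤ ε) ∧
    (∀ hi : Fin k → (Fin k → ℝ) → EuclideanSpace ℝ (Fin n) → ℝ,
        (∀ i : Fin k, ∀ F ∈ O, ∀ z : EuclideanSpace ℝ (Fin n),
          HasDerivAt (fun t : ℝ => h (F + t • (Pi.single i 1 : Fin k → ℝ)) z) (hi i F z) 0) →
        (∀ i : Fin k, GoodFamily k n r0 ζ O Q (hi i)) →
        ∀ F ∈ O, ∀ i : Fin k, ∀ ε : ℝ, 0 < ε → ∃ δ : ℝ, 0 < δ ∧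
          ∀ η : ℝ, η ≠ 0 → |η| < δ →
            ∀ z : EuclideanSpace ℝ (Fin n),
              Real.exp (-((1 - ζ) * Q z) / 2) *
                  etaylorNorm r0
                    (fun w => h (F + η • (Pi.single i 1 : Fin k → ℝ)) w - h F w - η * hi i F w) z
                ≤ ε * |η|) :=
  stmt6_general k n r0 ζ hζ1 O hO Q B hQB hQpos h hgood
end

section
/- Let A ⊂ ℤ^d be finite and let 𝒩 : (ℝ^d)^A → ℝ be a discrete null Lagrangian which is invariant under constant shifts (𝒩(ψ + a) = 𝒩(ψ) for every ψ ∈ (ℝ^d)^A and every constant a ∈ ℝ^d) and bounded on bounded subsets of (ℝ^d)^A. Let F : ℝ^d → ℝ^d be linear and let P ≥ 1 be an integer with 8·sup_{y∈A}|y|_∞ ≤ P. Then for every P-periodic function φ : ℤ^d → ℝ^d (i.e. φ(x + P e_i) = φ(x) for all x and i): Σ_{x ∈ {0,…,P−1}^d} 𝒩((F+φ)_{τ_x(A)}) = P^d · 𝒩(F|_A), where (F+φ)_{τ_x(A)} ∈ (ℝ^d)^A is the function y ↦ F(x+y) + φ(x+y) and F|_A is the restriction of F to A. -/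
open scoped BigOperators

/-- The set `Λ_A = {x ∈ ℤ^d : (x + A) ∩ Λ ≠ ∅}` as a finset. -/
def LambdaA {d : ℕ} (A Λ : Finset (Fin d → ℤ)) : Finset (Fin d → ℤ) :=
  Λ.biUnion fun l => A.image fun a => l - a

/-- `𝒩 : (ℝ^m)^A → ℝ` is a discrete null Lagrangian if for every finite `Λ ⊂ ℤ^d` and all
`φ, φ̃ : ℤ^d → ℝ^m` agreeing outside `Λ`, the sums of `𝒩` over translates indexed by `Λ_A`
agree. -/
def IsDiscreteNullLagrangian {d m : ℕ} (A : Finset (Fin d → ℤ))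
    (N : (↥A → (Fin m → ℝ)) → ℝ) : Prop :=
  ∀ (Λ : Finset (Fin d → ℤ)) (φ φ' : (Fin d → ℤ) → (Fin m → ℝ)),
    (∀ x, x ∉ Λ → φ x = φ' x) →
    ∑ x ∈ LambdaA A Λ, N (fun y => φ (x + ↑y)) = ∑ x ∈ LambdaA A Λ, N (fun y => φ' (x + ↑y))

/-!
By shift invariance the summand `𝒩((F + φ)_{τ_x(A)})` equals `h x := 𝒩(F|_A + φ(x + ·))`, a
`P`-periodic function of `x`. On the cube `Λ = [0, kP)^d` compare `F + 1_Λ φ` with `F`: the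
null-Lagrangian property and shift invariance give
`∑_{Λ_A} 𝒩((F + 1_Λ φ)_{τ_x(A)}) = |Λ_A| 𝒩(F|_A)`, and for `x` in the inner cube, where
`x + A ⊆ Λ`, the summand is `h x`. As `𝒩` is bounded on the
patterns involved, `∑_Λ h` and `|Λ| 𝒩(F|_A)` differ by `O(k^(d-1))`, while periodicity gives
`∑_Λ h = k^d ∑_{[0,P)^d} h`. Divide by `k^d` and let `k → ∞`.
-/

open Finset Filter Topology

section Periodic

theorem map_add_eq_of_mem_closure {G α : Type*} [AddGroup G] {f : G → α} {s : Set G}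
    (hs : ∀ v ∈ s, ∀ x, f (x + v) = f x) {v : G} (hv : v ∈ AddSubgroup.closure s) (x : G) :
    f (x + v) = f x := by
  induction hv using AddSubgroup.closure_induction generalizing x with
  | mem v hv => exact hs v hv x
  | zero => rw [add_zero]
  | add v w _ _ hv hw => rw [← add_assoc, hw, hv]
  | neg v _ hv => rw [← hv (x + -v), neg_add_cancel_right]

variable {d : ℕ} {α : Type*} {f : (Fin d → ℤ) → α} {P : ℤ}

theorem map_add_smul_of_periodic (hf : ∀ x i, f (x + Pi.single i P) = f x)
    (m x : Fin d → ℤ) : f (x + P • m) = f x := by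
  refine map_add_eq_of_mem_closure (s := Set.range fun i => Pi.single i P)
    (by rintro _ ⟨i, rfl⟩ x; exact hf x i) ?_ x
  have hm : P • m = ∑ i, m i • Pi.single i P := by
    ext j
    simp [Finset.sum_apply, Pi.single_apply, mul_comm]
  rw [hm]
  exact AddSubgroup.sum_mem _ fun i _ =>
    AddSubgroup.zsmul_mem _ (AddSubgroup.subset_closure (Set.mem_range_self i)) _

theorem finite_range_of_periodic (hP : 0 < P) (hf : ∀ x i, f (x + Pi.single i P) = f x) :
    (Set.range f).Finite := by
  refine ((Set.Finite.pi fun _ => Set.finite_Ico 0 P).image f).subset ?_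
  rintro _ ⟨z, rfl⟩
  refine ⟨fun j => z j % P,
    Set.mem_univ_pi.2 fun j => ⟨Int.emod_nonneg _ hP.ne', Int.emod_lt_of_pos _ hP⟩, ?_⟩
  rw [← map_add_smul_of_periodic hf (fun j => z j / P)]
  congr 1
  ext j
  exact Int.emod_add_mul_ediv (z j) P

end Periodic

section Cube

variable {d : ℕ}

noncomputable def cube (d : ℕ) (a : ℤ) (n : ℕ) : Finset (Fin d → ℤ) :=
  Fintype.piFinset fun _ => Ico a (a + n)

theorem mem_cube {a : ℤ} {n : ℕ} {x : Fin d → ℤ} :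
    x ∈ cube d a n ↔ ∀ j, a ≤ x j ∧ x j < a + n := by
  simp [cube]

theorem card_cube (a : ℤ) (n : ℕ) : #(cube d a n) = n ^ d := by
  simp [cube, Fintype.card_piFinset]

theorem cube_subset_cube {a b : ℤ} {n k : ℕ} (hab : a ≤ b) (hk : b + k ≤ a + n) :
    cube d b k ⊆ cube d a n := fun x hx =>
  mem_cube.2 fun j => by have := mem_cube.1 hx j; omega

theorem sum_cube_zero_eq_sum_fin {M : Type*} [AddCommMonoid M] (n : ℕ) (f : (Fin d → ℤ) → M) :
    ∑ x ∈ cube d 0 n, f x = ∑ x : Fin d → Fin n, f fun j => (x j : ℤ) := by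
  symm
  refine Finset.sum_bij (fun x _ j => (x j : ℤ)) (fun x _ => mem_cube.2 fun j => by simp)
    (fun x _ y _ hxy => funext fun j => Fin.ext (by simpa using congrFun hxy j))
    (fun x hx => ?_) (fun _ _ => rfl)
  refine ⟨fun j => ⟨(x j).toNat, by have := mem_cube.1 hx j; omega⟩, mem_univ _,
    funext fun j => ?_⟩
  have := mem_cube.1 hx j
  simp only
  omega

theorem sum_fin_mul_of_periodic {M : Type*} [AddCommMonoid M] {f : (Fin d → ℤ) → M} {P : ℕ}
    (hf : ∀ m x, f (x + (P : ℤ) • m) = f x) (k : ℕ) :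
    ∑ x : Fin d → Fin (k * P), f (fun j => (x j : ℤ))
      = k ^ d • ∑ x : Fin d → Fin P, f fun j => (x j : ℤ) := by
  let e : (Fin d → Fin k) × (Fin d → Fin P) ≃ (Fin d → Fin (k * P)) :=
    (Equiv.arrowProdEquivProdArrow _ _ _).symm.trans
      (Equiv.piCongrRight fun _ => finProdFinEquiv)
  rw [← Fintype.sum_equiv e (fun q => f fun j => (q.2 j : ℤ)) _ fun q => ?_]
  · simp only [Fintype.sum_prod_type, sum_const, card_univ, Fintype.card_fun, Fintype.card_fin]
  -- `e (m, r) = r + P • m` coordinatewise, since `finProdFinEquiv (a, b) = b + P * a`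
  rw [← hf (fun j => (q.1 j : ℤ))]
  rfl

end Cube

section Estimates

theorem card_sdiff_le_card_sub_card {ι : Type*} [DecidableEq ι] {J L Q : Finset ι}
    (hJL : J ⊆ L) (hLQ : L ⊆ Q) : (#(L \ J) : ℝ) ≤ #Q - #J := by
  have hsplit := card_sdiff_add_card_eq_card hJL
  have hle := card_le_card hLQ
  rw [le_sub_iff_add_le]
  exact_mod_cast hsplit ▸ hle

theorem abs_sum_le_of_eqOn_of_sum_eq_zero {ι : Type*} [DecidableEq ι] {Λ L J : Finset ι}
    {u v : ι → ℝ} {B : ℝ} (hJΛ : J ⊆ Λ) (hJL : J ⊆ L) (huv : ∀ x ∈ J, u x = v x)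
    (hu : ∀ x, |u x| ≤ B) (hv : ∀ x, |v x| ≤ B) (hv₀ : ∑ x ∈ L, v x = 0) :
    |∑ x ∈ Λ, u x| ≤ B * (#(Λ \ J) + #(L \ J)) := by
  have abs_sum_le {s : Finset ι} {w : ι → ℝ} (hw : ∀ x, |w x| ≤ B) :
      |∑ x ∈ s, w x| ≤ #s * B :=
    (abs_sum_le_sum_abs _ _).trans <|
      (sum_le_card_nsmul _ _ _ fun x _ => hw x).trans_eq (nsmul_eq_mul _ _)
  have hΛ : ∑ x ∈ Λ, u x = ∑ x ∈ Λ \ J, u x - ∑ x ∈ L \ J, v x := by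
    rw [← sum_sdiff hJΛ, sum_congr rfl huv]
    rw [← sum_sdiff hJL] at hv₀
    linarith
  rw [hΛ]
  linarith [abs_sub (∑ x ∈ Λ \ J, u x) (∑ x ∈ L \ J, v x), abs_sum_le (s := Λ \ J) hu,
    abs_sum_le (s := L \ J) hv]

theorem eq_zero_of_abs_mul_pow_le {X C a : ℝ} {d : ℕ}
    (h : ∀ᶠ k : ℕ in atTop, |X| * (k : ℝ) ^ d ≤ C * (((k : ℝ) + a) ^ d - ((k : ℝ) - a) ^ d)) :
    X = 0 := by
  have hbound : ∀ᶠ k : ℕ in atTop, |X| ≤ C * ((1 + a / k) ^ d - (1 - a / k) ^ d) := by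
    filter_upwards [h, eventually_gt_atTop 0] with k hk' hk₀
    have hk : (0 : ℝ) < k := Nat.cast_pos.2 hk₀
    have hscale : C * ((1 + a / k) ^ d - (1 - a / k) ^ d) * (k : ℝ) ^ d
        = C * (((k : ℝ) + a) ^ d - ((k : ℝ) - a) ^ d) := by
      rw [mul_assoc, sub_mul, ← mul_pow, ← mul_pow, add_mul, sub_mul, one_mul,
        div_mul_cancel₀ _ hk.ne']
    exact le_of_mul_le_mul_right (hk'.trans_eq hscale.symm) (pow_pos hk d)
  have hlim : Tendsto (fun k : ℕ => C * ((1 + a / k) ^ d - (1 - a / k) ^ d)) atTop (𝓝 0) := by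
    have ha := tendsto_const_div_atTop_nhds_zero_nat a
    simpa using (((tendsto_const_nhds (x := (1 : ℝ)).add ha).pow d).sub
      ((tendsto_const_nhds (x := (1 : ℝ)).sub ha).pow d)).const_mul C
  exact abs_nonpos_iff.1 (ge_of_tendsto hlim hbound)

theorem exists_abs_le_of_norm_sub_le {ι : Type*} [Finite ι] {m : ℕ} {N : (ι → Fin m → ℝ) → ℝ}
    (hbdd : ∀ r : ℝ, ∃ M : ℝ, ∀ ψ : ι → Fin m → ℝ, (∀ y s, |ψ y s| ≤ r) → |N ψ| ≤ M)
    (ψ₀ : ι → Fin m → ℝ) (C : ℝ) :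
    ∃ M, ∀ ψ : ι → Fin m → ℝ, (∀ y, ‖ψ y - ψ₀ y‖ ≤ C) → |N ψ| ≤ M := by
  obtain ⟨C₀, hC₀⟩ : ∃ C₀, ∀ y, ‖ψ₀ y‖ ≤ C₀ := by
    simpa using isBounded_iff_forall_norm_le.1 (Set.finite_range ψ₀).isBounded
  obtain ⟨M, hM⟩ := hbdd (C₀ + C)
  exact ⟨M, fun ψ hψ => hM ψ fun y s => (norm_le_pi_norm (ψ y) s).trans <|
    (norm_le_insert' (ψ y) (ψ₀ y)).trans (by linarith [hC₀ y, hψ y])⟩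

end Estimates

section Geometry

variable {d : ℕ}

theorem mem_LambdaA {A Λ : Finset (Fin d → ℤ)} {x : Fin d → ℤ} :
    x ∈ LambdaA A Λ ↔ ∃ a ∈ A, x + a ∈ Λ := by
  simp only [LambdaA, mem_biUnion, mem_image]
  constructor
  · rintro ⟨l, hl, a, ha, rfl⟩
    exact ⟨a, ha, by rwa [sub_add_cancel]⟩
  · rintro ⟨a, ha, hx⟩
    exact ⟨x + a, hx, a, ha, add_sub_cancel_right x a⟩

variable {A : Finset (Fin d → ℤ)} {R n : ℕ}

theorem add_mem_cube_of_mem_cube (hA : ∀ a ∈ A, ∀ j, |a j| ≤ R) {x a : Fin d → ℤ}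
    (hx : x ∈ cube d R (n - 2 * R)) (ha : a ∈ A) (hn : 2 * R ≤ n) : x + a ∈ cube d 0 n :=
  mem_cube.2 fun j => by
    have := mem_cube.1 hx j
    have := abs_le.1 (hA a ha j)
    simp only [Pi.add_apply]
    omega

theorem cube_subset_LambdaA (hA : ∀ a ∈ A, ∀ j, |a j| ≤ R) (hAne : A.Nonempty)
    (hn : 2 * R ≤ n) : cube d R (n - 2 * R) ⊆ LambdaA A (cube d 0 n) := fun _ hx =>
  mem_LambdaA.2 ⟨hAne.choose, hAne.choose_spec,
    add_mem_cube_of_mem_cube hA hx hAne.choose_spec hn⟩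

theorem LambdaA_cube_subset (hA : ∀ a ∈ A, ∀ j, |a j| ≤ R) :
    LambdaA A (cube d 0 n) ⊆ cube d (-R) (n + 2 * R) := fun x hx => by
  obtain ⟨a, ha, hxa⟩ := mem_LambdaA.1 hx
  refine mem_cube.2 fun j => ?_
  have := mem_cube.1 hxa j
  have := abs_le.1 (hA a ha j)
  simp only [Pi.add_apply] at *
  omega

end Geometry

section NullLagrangian

def IsShiftInvariant {ι E : Type*} [Add E] (N : (ι → E) → ℝ) : Prop :=
  ∀ ψ a, N (fun y => ψ y + a) = N ψ

variable {d m : ℕ} {A : Finset (Fin d → ℤ)} {N : (A → Fin m → ℝ) → ℝ}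

theorem IsShiftInvariant.apply_map_add (hN : IsShiftInvariant N)
    (Φ : (Fin d → ℤ) →+ (Fin m → ℝ)) (x : Fin d → ℤ) (g : A → Fin m → ℝ) :
    N (fun y => Φ (x + y) + g y) = N (fun y => Φ y + g y) :=
  (congrArg N (funext fun y => by rw [map_add]; abel)).trans (hN _ (Φ x))

theorem IsDiscreteNullLagrangian.sum_map_add_indicator (hNL : IsDiscreteNullLagrangian A N)
    (hN : IsShiftInvariant N) (Φ : (Fin d → ℤ) →+ (Fin m → ℝ)) (Λ : Finset (Fin d → ℤ))
    (g : (Fin d → ℤ) → Fin m → ℝ) :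
    ∑ x ∈ LambdaA A Λ, N (fun y => Φ y + Set.indicator Λ g (x + y))
      = #(LambdaA A Λ) * N (fun y => Φ y) := by
  have hcompact := hNL Λ (⇑Φ + Set.indicator Λ g) Φ fun z hz => by simp [hz]
  calc _ = ∑ x ∈ LambdaA A Λ, N (fun y => Φ (x + y) + Set.indicator Λ g (x + y)) :=
        sum_congr rfl fun x _ => (hN.apply_map_add Φ x _).symm
    _ = ∑ x ∈ LambdaA A Λ, N (fun y => Φ (x + y)) := hcompact
    _ = ∑ x ∈ LambdaA A Λ, N (fun y => Φ y) :=
        sum_congr rfl fun x _ => by simpa using hN.apply_map_add Φ x 0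
    _ = _ := by rw [sum_const, nsmul_eq_mul]

theorem IsDiscreteNullLagrangian.abs_sum_cube_sub_le (hNL : IsDiscreteNullLagrangian A N)
    (hN : IsShiftInvariant N) (Φ : (Fin d → ℤ) →+ (Fin m → ℝ)) {g : (Fin d → ℤ) → Fin m → ℝ}
    {C M : ℝ} (hg : ∀ z, ‖g z‖ ≤ C)
    (hM : ∀ ψ : A → Fin m → ℝ, (∀ y, ‖ψ y - Φ y‖ ≤ C) → |N ψ| ≤ M)
    {R : ℕ} (hA : ∀ a ∈ A, ∀ j, |a j| ≤ R) (hAne : A.Nonempty) {n : ℕ} (hn : 2 * R ≤ n) :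
    |∑ x ∈ cube d 0 n, N (fun y => Φ y + g (x + y)) - n ^ d * N (fun y => Φ y)|
      ≤ 4 * M * (((n : ℝ) + 2 * R) ^ d - ((n - 2 * R : ℕ) : ℝ) ^ d) := by
  set c := N fun y => Φ y
  have hdev : ∀ g' : (Fin d → ℤ) → Fin m → ℝ, (∀ z, ‖g' z‖ ≤ C) →
      ∀ x, |N (fun y => Φ y + g' (x + y)) - c| ≤ 2 * M := fun g' hg' x => by
    have h₁ := hM (fun y => Φ y + g' (x + y)) fun y => by simpa using hg' (x + y)
    have h₂ := hM (fun y => Φ y) fun y => by simpa using (norm_nonneg _).trans (hg' 0)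
    linarith [abs_sub (N fun y => Φ y + g' (x + y)) c]
  have hJΛ : cube d R (n - 2 * R) ⊆ cube d 0 n := cube_subset_cube (by positivity) (by omega)
  have hΛQ : cube d 0 n ⊆ cube d (-R) (n + 2 * R) := cube_subset_cube (by omega) (by omega)
  have hLQ := LambdaA_cube_subset (n := n) hA
  have hJL := cube_subset_LambdaA hA hAne hn
  have hest := abs_sum_le_of_eqOn_of_sum_eq_zero hJΛ hJL
    (u := fun x => N (fun y => Φ y + g (x + y)) - c)
    (v := fun x => N (fun y => Φ y + Set.indicator (cube d 0 n) g (x + y)) - c)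
    (fun x hx => by
      simp only [Set.indicator_of_mem
        (mem_coe.2 (add_mem_cube_of_mem_cube hA hx (Subtype.prop _) hn))])
    (hdev g hg) (hdev _ fun z => (norm_indicator_le_norm_self _ _).trans (hg z))
    (by rw [sum_sub_distrib, hNL.sum_map_add_indicator hN, sum_const, nsmul_eq_mul, sub_self])
  rw [sum_sub_distrib, sum_const, card_cube, nsmul_eq_mul, Nat.cast_pow] at hest
  have h₁ := card_sdiff_le_card_sub_card hJΛ hΛQ
  have h₂ := card_sdiff_le_card_sub_card hJL hLQ
  rw [card_cube, card_cube] at h₁ h₂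
  push_cast at h₁ h₂
  have hM₀ : 0 ≤ 2 * M := (abs_nonneg _).trans (hdev g hg 0)
  refine hest.trans ?_
  linarith [mul_le_mul_of_nonneg_left (add_le_add h₁ h₂) hM₀]

theorem IsDiscreteNullLagrangian.abs_sum_period_sub_le (hNL : IsDiscreteNullLagrangian A N)
    (hN : IsShiftInvariant N) (Φ : (Fin d → ℤ) →+ (Fin m → ℝ)) {P : ℕ}
    {φ : (Fin d → ℤ) → Fin m → ℝ} (hper : ∀ x i, φ (x + Pi.single i (P : ℤ)) = φ x)
    {C M : ℝ} (hφ : ∀ z, ‖φ z‖ ≤ C)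
    (hM : ∀ ψ : A → Fin m → ℝ, (∀ y, ‖ψ y - Φ y‖ ≤ C) → |N ψ| ≤ M)
    {R : ℕ} (hA : ∀ a ∈ A, ∀ j, |a j| ≤ R) (hAne : A.Nonempty) (hP : 0 < P) {k : ℕ}
    (hk : 2 * R ≤ k) :
    |∑ x : Fin d → Fin P, N (fun y => Φ y + φ ((fun j => (x j : ℤ)) + y))
        - P ^ d * N (fun y => Φ y)| * k ^ d
      ≤ 4 * M * P ^ d * (((k : ℝ) + 2 * R) ^ d - ((k : ℝ) - 2 * R) ^ d) := by
  have hAP : ∀ a ∈ A, ∀ j, |a j| ≤ (R * P : ℕ) := fun a ha j =>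
    (hA a ha j).trans (by exact_mod_cast Nat.le_mul_of_pos_right R hP)
  have hsum := hNL.abs_sum_cube_sub_le hN Φ hφ hM hAP hAne (n := k * P) (by nlinarith)
  set h : (Fin d → ℤ) → ℝ := fun x => N fun y => Φ y + φ (x + y) with h_def
  have hperiodic : ∀ m x, h (x + (P : ℤ) • m) = h x :=
    map_add_smul_of_periodic fun x i => by simp only [h_def, add_right_comm x, hper]
  rw [sum_cube_zero_eq_sum_fin, sum_fin_mul_of_periodic hperiodic, nsmul_eq_mul,
    Nat.cast_sub (by nlinarith)] at hsum
  push_cast at hsum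
  calc _ = |(∑ x : Fin d → Fin P, h (fun j => (x j : ℤ)) - P ^ d * N (fun y => Φ y)) * k ^ d| := by
        rw [abs_mul, abs_of_nonneg (by positivity : (0 : ℝ) ≤ k ^ d)]
    _ = _ := by rw [mul_pow]; ring_nf
    _ ≤ _ := hsum
    _ = _ := by
      rw [show (k : ℝ) * P + 2 * (R * P) = (k + 2 * R) * P by ring,
        show (k : ℝ) * P - 2 * (R * P) = (k - 2 * R) * P by ring, mul_pow, mul_pow]
      ring

theorem IsDiscreteNullLagrangian.sum_periodic_eq (hNL : IsDiscreteNullLagrangian A N)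
    (hN : IsShiftInvariant N)
    (hbdd : ∀ r : ℝ, ∃ M : ℝ, ∀ ψ : A → Fin m → ℝ, (∀ y s, |ψ y s| ≤ r) → |N ψ| ≤ M)
    (Φ : (Fin d → ℤ) →+ (Fin m → ℝ)) {P : ℕ} (hP : 0 < P) {φ : (Fin d → ℤ) → Fin m → ℝ}
    (hper : ∀ x i, φ (x + Pi.single i (P : ℤ)) = φ x) :
    ∑ x : Fin d → Fin P, N (fun y => Φ y + φ ((fun j => (x j : ℤ)) + y))
      = P ^ d * N (fun y => Φ y) := by
  rcases A.eq_empty_or_nonempty with rfl | hAne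
  · have hconst (x : Fin d → Fin P) : (fun y : ↥(∅ : Finset (Fin d → ℤ)) =>
        Φ y + φ ((fun j => (x j : ℤ)) + y)) = fun y : ↥(∅ : Finset (Fin d → ℤ)) => Φ y :=
      Subsingleton.elim _ _
    simp [hconst]
  obtain ⟨R, hR⟩ := Finite.exists_le fun p : A × Fin d => (p.1.1 p.2).natAbs
  have hA : ∀ a ∈ A, ∀ j, |a j| ≤ R := fun a ha j => by
    rw [Int.abs_eq_natAbs]
    exact_mod_cast hR (⟨a, ha⟩, j)
  obtain ⟨C, hC⟩ : ∃ C, ∀ z, ‖φ z‖ ≤ C := by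
    simpa using isBounded_iff_forall_norm_le.1 (finite_range_of_periodic (by omega) hper).isBounded
  obtain ⟨M, hM⟩ := exists_abs_le_of_norm_sub_le hbdd (fun y => Φ y) C
  refine sub_eq_zero.1 (eq_zero_of_abs_mul_pow_le (d := d) (C := 4 * M * P ^ d) (a := 2 * R) ?_)
  filter_upwards [eventually_ge_atTop (2 * R)] with k hk
  exact hNL.abs_sum_period_sub_le hN Φ hper hC hM hA hAne hP hk

end NullLagrangian

theorem stmt7_general (d : ℕ) (A : Finset (Fin d → ℤ))
    (N : (↥A → (Fin d → ℝ)) → ℝ)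
    (hNL : IsDiscreteNullLagrangian A N)
    (hshift : ∀ (ψ : ↥A → Fin d → ℝ) (a : Fin d → ℝ), N (fun y => ψ y + a) = N ψ)
    (hbdd : ∀ r : ℝ, ∃ M : ℝ, ∀ ψ : ↥A → Fin d → ℝ, (∀ y s, |ψ y s| ≤ r) → |N ψ| ≤ M)
    (F : (Fin d → ℝ) →ₗ[ℝ] (Fin d → ℝ))
    (P : ℕ) (hP : 1 ≤ P)
    (φ : (Fin d → ℤ) → (Fin d → ℝ))
    (hper : ∀ x, ∀ i : Fin d, φ (x + Pi.single i (P : ℤ)) = φ x) :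
    ∑ x : Fin d → Fin P, N (fun y : ↥A =>
        F (fun j => (((x j : ℤ) + (y : Fin d → ℤ) j : ℤ) : ℝ)) +
          φ ((fun j => (x j : ℤ)) + ↑y))
      = (P : ℝ) ^ d * N (fun y : ↥A => F (fun j => (((y : Fin d → ℤ) j : ℝ)))) := by
  let Φ : (Fin d → ℤ) →+ (Fin d → ℝ) :=
    F.toAddMonoidHom.comp (AddMonoidHom.compLeft (Int.castAddHom ℝ) (Fin d))
  calc _ = ∑ x : Fin d → Fin P, N (fun y => Φ y + φ ((fun j => (x j : ℤ)) + y)) :=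
        sum_congr rfl fun x _ => IsShiftInvariant.apply_map_add hshift Φ (fun j => (x j : ℤ))
          fun y => φ ((fun j => (x j : ℤ)) + y)
    _ = _ := hNL.sum_periodic_eq hshift hbdd Φ hP hper

/-- A shift-invariant discrete null Lagrangian which is bounded on bounded sets sums, over a
period box, to `P^d 𝒩(F|_A)` on periodic perturbations of a linear map `F`. -/
theorem stmt7 (d : ℕ) (hd : 1 ≤ d) (A : Finset (Fin d → ℤ))
    (N : (↥A → (Fin d → ℝ)) → ℝ)
    (hNL : IsDiscreteNullLagrangian A N)
    (hshift : ∀ (ψ : ↥A → Fin d → ℝ) (a : Fin d → ℝ), N (fun y => ψ y + a) = N ψ)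
    (hbdd : ∀ r : ℝ, ∃ M : ℝ, ∀ ψ : ↥A → Fin d → ℝ, (∀ y s, |ψ y s| ≤ r) → |N ψ| ≤ M)
    (F : (Fin d → ℝ) →ₗ[ℝ] (Fin d → ℝ))
    (P : ℕ) (hP : 1 ≤ P)
    (hPA : ∀ y ∈ A, ∀ j, 8 * (y j).natAbs ≤ P)
    (φ : (Fin d → ℤ) → (Fin d → ℝ))
    (hper : ∀ x, ∀ i : Fin d, φ (x + Pi.single i (P : ℤ)) = φ x) :
    ∑ x : Fin d → Fin P, N (fun y : ↥A =>
        F (fun j => (((x j : ℤ) + (y : Fin d → ℤ) j : ℤ) : ℝ)) +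
          φ ((fun j => (x j : ℤ)) + ↑y))
      = (P : ℝ) ^ d * N (fun y : ↥A => F (fun j => (((y : Fin d → ℤ) j : ℝ)))) :=
  stmt7_general d A N hNL hshift hbdd F P hP φ hper
end

section
/- Let d ≥ 1, m ≥ 1, R0 ≥ 1 and Q := {0,…,R0}^d. The function 𝒩_0 : (ℝ^m)^Q → ℝ defined by 𝒩_0(ψ) := −Σ_{i=1}^d |∇_i ψ(0)|² + (R0 (R0+1)^{d−1})^{−1} Σ_{i=1}^d Σ_{y ∈ Q, y+e_i ∈ Q} |∇_i ψ(y)|² is a discrete null Lagrangian, and 𝒩_0(ψ) = 0 whenever ψ is the restriction to Q of an affine map ℝ^d → ℝ^m. -/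
/-!
For each direction `i`, write `g_i(z) = |∇_i φ(z)|²` and `Q_i = {y ∈ Q : y + e_i ∈ Q}`, a box with
`R0 (R0+1)^{d-1}` points. Summed over `Λ_A`, the first part of `𝒩₀` is `-∑_{x ∈ Λ_A} g_i(x)` and
the second is the average over `y ∈ Q_i` of `∑_{x ∈ Λ_A} g_i(x + y)`. Changing `φ` inside `Λ` only
changes `g_i` on `Λ ∪ (Λ - e_i)`, and every translate `Λ_A + y` with `y ∈ Q_i` contains that set,
so all these sums change by the same amount and the two parts cancel. For affine `φ`, `g_i` is a
constant, and the same count gives `𝒩₀ = 0`.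
-/

open scoped BigOperators

/-- The box `Q = {0,…,R0}^d ⊂ ℤ^d`. -/
noncomputable def QBox (d R0 : ℕ) : Finset (Fin d → ℤ) :=
  Finset.Icc 0 (fun _ => (R0 : ℤ))

/-- Extension of `ψ : (ℝ^m)^Q` by `0` outside `Q`. -/
noncomputable def extQ {d m R0 : ℕ} (ψ : ↥(QBox d R0) → Fin m → ℝ) (x : Fin d → ℤ) : Fin m → ℝ :=
  if h : x ∈ QBox d R0 then ψ ⟨x, h⟩ else 0

/-- The null Lagrangian
`𝒩₀(ψ) = −∑_i |∇_i ψ(0)|² + (R0 (R0+1)^{d−1})⁻¹ ∑_i ∑_{y, y+e_i ∈ Q} |∇_i ψ(y)|²`. -/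
noncomputable def NL0 {d m R0 : ℕ} (ψ : ↥(QBox d R0) → Fin m → ℝ) : ℝ :=
  -(∑ i : Fin d, ∑ s : Fin m, (extQ ψ (Pi.single i 1) s - extQ ψ 0 s) ^ 2) +
    ((R0 : ℝ) * ((R0 : ℝ) + 1) ^ (d - 1))⁻¹ *
      ∑ i : Fin d, ∑ y ∈ (QBox d R0).filter (fun y => y + Pi.single i 1 ∈ QBox d R0),
        ∑ s : Fin m, (extQ ψ (y + Pi.single i 1) s - extQ ψ y s) ^ 2

open Finset

theorem Finset.sum_comp_add_sub_sum_comp_add {G M : Type*} [AddCommGroup G] [AddCommGroup M]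
    {F F' : G → M} {S t : Finset G} (y : G) (hF : ∀ z ∉ S, F z = F' z)
    (hS : ∀ z ∈ S, z - y ∈ t) :
    ∑ x ∈ t, F (x + y) - ∑ x ∈ t, F' (x + y) = ∑ z ∈ S, (F z - F' z) := by
  rw [← sum_sub_distrib]
  change ∑ x ∈ t, (fun z => F z - F' z) (addRightEmbedding y x) = _
  rw [← sum_map t (addRightEmbedding y) (fun z => F z - F' z)]
  refine (sum_subset (fun z hz => mem_map.2 ⟨z - y, hS z hz, sub_add_cancel z y⟩) ?_).symm
  intro z _ hz
  simp [hF z hz]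

variable {d m R0 : ℕ}

lemma mem_QBox {x : Fin d → ℤ} : x ∈ QBox d R0 ↔ ∀ j, 0 ≤ x j ∧ x j ≤ R0 := by
  simp [QBox, Pi.le_def, forall_and]

lemma zero_mem_QBox : (0 : Fin d → ℤ) ∈ QBox d R0 := by
  simp [mem_QBox]

lemma single_mem_QBox (hR0 : 1 ≤ R0) (i : Fin d) : (Pi.single i 1 : Fin d → ℤ) ∈ QBox d R0 := by
  rw [mem_QBox]
  intro j
  rcases eq_or_ne j i with rfl | h
  · simpa using hR0
  · simp [h]

lemma filter_add_single_mem_QBox (i : Fin d) :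
    (QBox d R0).filter (fun y => y + Pi.single i 1 ∈ QBox d R0) =
      Icc 0 (Function.update (fun _ => (R0 : ℤ)) i (R0 - 1)) := by
  ext y
  simp only [mem_filter, mem_QBox, mem_Icc, Pi.le_def, Pi.zero_apply, Pi.add_apply]
  refine forall_and.symm.trans (Iff.trans ?_ forall_and)
  refine forall_congr' fun j => ?_
  rcases eq_or_ne j i with rfl | h
  · simp; omega
  · simp [h]

lemma card_filter_add_single_mem_QBox (hR0 : 1 ≤ R0) (i : Fin d) :
    #((QBox d R0).filter (fun y => y + Pi.single i 1 ∈ QBox d R0)) = R0 * (R0 + 1) ^ (d - 1) := by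
  classical
  have hcard : ∀ j, #(Icc 0 (Function.update (fun _ => (R0 : ℤ)) i (R0 - 1) j)) =
      Function.update (fun _ => R0 + 1) i R0 j := by
    intro j
    rcases eq_or_ne j i with rfl | h
    · simp only [Function.update_self, Int.card_Icc]; omega
    · simp [h]
  rw [filter_add_single_mem_QBox, Pi.card_Icc]
  simp only [Pi.zero_apply, hcard, prod_update_of_mem (mem_univ i), prod_const, card_sdiff,
    card_univ, Fintype.card_fin, card_singleton, inter_univ]

lemma sum_filter_add_single_mem_QBox_const (hR0 : 1 ≤ R0) (a : Fin d → ℝ) :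
    ((R0 : ℝ) * ((R0 : ℝ) + 1) ^ (d - 1))⁻¹ *
      ∑ i : Fin d, ∑ _y ∈ (QBox d R0).filter (fun y => y + Pi.single i 1 ∈ QBox d R0), a i =
        ∑ i, a i := by
  have hpos : (0 : ℝ) < R0 * (R0 + 1) ^ (d - 1) := by
    have : (0 : ℝ) < R0 := by exact_mod_cast hR0
    positivity
  simp only [sum_const, card_filter_add_single_mem_QBox hR0, nsmul_eq_mul, ← mul_sum]
  push_cast
  exact inv_mul_cancel_left₀ hpos.ne' _

/-- `|∇_i φ(z)|²`. -/
def gradSq (φ : (Fin d → ℤ) → Fin m → ℝ) (i : Fin d) (z : Fin d → ℤ) : ℝ :=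
  ∑ s, (φ (z + Pi.single i 1) s - φ z s) ^ 2

lemma gradSq_eq_of_eqOn {φ φ' : (Fin d → ℤ) → Fin m → ℝ} {Λ : Finset (Fin d → ℤ)}
    (hφ : ∀ x ∉ Λ, φ x = φ' x) (i : Fin d) {z : Fin d → ℤ}
    (hz : z ∉ Λ ∪ Λ.image (· - Pi.single i 1)) : gradSq φ i z = gradSq φ' i z := by
  simp only [mem_union, mem_image, not_or, not_exists, not_and] at hz
  have hzi : z + Pi.single i 1 ∉ Λ := fun h => hz.2 _ h (add_sub_cancel_right z _)
  simp only [gradSq, hφ z hz.1, hφ _ hzi]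

lemma gradSq_affine (T : (Fin d → ℝ) →ₗ[ℝ] (Fin m → ℝ)) (b : Fin m → ℝ) (i : Fin d)
    (z : Fin d → ℤ) :
    gradSq (fun x => T (fun j => (x j : ℝ)) + b) i z = ∑ s, T (Pi.single i 1) s ^ 2 := by
  have hstep : (fun j => ((z + Pi.single i 1 : Fin d → ℤ) j : ℝ)) =
      (fun j => (z j : ℝ)) + Pi.single i 1 := by
    ext j
    rcases eq_or_ne j i with rfl | h
    · simp
    · simp [h]
  simp only [gradSq]
  rw [hstep]
  simp only [map_add, Pi.add_apply, add_sub_add_right_eq_sub, add_sub_cancel_left]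

lemma NL0_translate (hR0 : 1 ≤ R0) (φ : (Fin d → ℤ) → Fin m → ℝ) (x : Fin d → ℤ) :
    NL0 (fun y : QBox d R0 => φ (x + y)) =
      -∑ i, gradSq φ i x + ((R0 : ℝ) * ((R0 : ℝ) + 1) ^ (d - 1))⁻¹ *
        ∑ i, ∑ y ∈ (QBox d R0).filter (fun y => y + Pi.single i 1 ∈ QBox d R0),
          gradSq φ i (x + y) := by
  have hext : ∀ z ∈ QBox d R0, extQ (fun y : QBox d R0 => φ (x + y)) z = φ (x + z) :=
    fun z hz => by simp [extQ, hz]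
  unfold NL0 gradSq
  congr 1
  · simp only [hext _ (single_mem_QBox hR0 _), hext _ zero_mem_QBox, add_zero]
  · refine congrArg _ (sum_congr rfl fun i _ => sum_congr rfl fun y hy => ?_)
    rw [mem_filter] at hy
    simp only [hext _ hy.1, hext _ hy.2, add_assoc]

lemma sum_NL0_translate (hR0 : 1 ≤ R0) (φ : (Fin d → ℤ) → Fin m → ℝ) (L : Finset (Fin d → ℤ)) :
    ∑ x ∈ L, NL0 (fun y : QBox d R0 => φ (x + y)) =
      -∑ i, ∑ x ∈ L, gradSq φ i x + ((R0 : ℝ) * ((R0 : ℝ) + 1) ^ (d - 1))⁻¹ *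
        ∑ i, ∑ y ∈ (QBox d R0).filter (fun y => y + Pi.single i 1 ∈ QBox d R0),
          ∑ x ∈ L, gradSq φ i (x + y) := by
  simp only [NL0_translate hR0, sum_add_distrib, sum_neg_distrib, ← mul_sum]
  rw [sum_comm]
  congr 2
  rw [sum_comm]
  exact sum_congr rfl fun i _ => sum_comm

lemma sub_mem_LambdaA {A Λ : Finset (Fin d → ℤ)} {l a : Fin d → ℤ} (hl : l ∈ Λ) (ha : a ∈ A) :
    l - a ∈ LambdaA A Λ :=
  mem_biUnion.2 ⟨l, hl, mem_image.2 ⟨a, ha, rfl⟩⟩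

lemma sub_mem_LambdaA_QBox {Λ : Finset (Fin d → ℤ)} {i : Fin d}
    {y z : Fin d → ℤ} (hy : y ∈ (QBox d R0).filter (fun y => y + Pi.single i 1 ∈ QBox d R0))
    (hz : z ∈ Λ ∪ Λ.image (· - Pi.single i 1)) : z - y ∈ LambdaA (QBox d R0) Λ := by
  rw [mem_filter] at hy
  rcases mem_union.1 hz with hz | hz
  · exact sub_mem_LambdaA hz hy.1
  · obtain ⟨l, hl, rfl⟩ := mem_image.1 hz
    rw [sub_sub, add_comm]
    exact sub_mem_LambdaA hl hy.2

theorem isDiscreteNullLagrangian_NL0 (hR0 : 1 ≤ R0) :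
    IsDiscreteNullLagrangian (QBox d R0) (NL0 (d := d) (m := m) (R0 := R0)) := by
  intro Λ φ φ' hφ
  set L := LambdaA (QBox d R0) Λ
  -- the common change of `∑ g_i` over every translate of `Λ_A` by `y ∈ Q_i`, `y = 0` included
  set D : Fin d → ℝ := fun i =>
    ∑ z ∈ Λ ∪ Λ.image (· - Pi.single i 1), (gradSq φ i z - gradSq φ' i z)
  have hD : ∀ i y, y ∈ (QBox d R0).filter (fun y => y + Pi.single i 1 ∈ QBox d R0) →
      ∑ x ∈ L, gradSq φ i (x + y) - ∑ x ∈ L, gradSq φ' i (x + y) = D i := fun i y hy =>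
    sum_comp_add_sub_sum_comp_add y (fun z hz => gradSq_eq_of_eqOn hφ i hz)
      (fun z hz => sub_mem_LambdaA_QBox hy hz)
  have hD0 : ∀ i, ∑ x ∈ L, gradSq φ i x - ∑ x ∈ L, gradSq φ' i x = D i := fun i => by
    simpa using hD i 0 (by simp [zero_mem_QBox, single_mem_QBox hR0])
  rw [← sub_eq_zero, sum_NL0_translate hR0, sum_NL0_translate hR0]
  calc _ = -∑ i, (∑ x ∈ L, gradSq φ i x - ∑ x ∈ L, gradSq φ' i x) +
        ((R0 : ℝ) * ((R0 : ℝ) + 1) ^ (d - 1))⁻¹ *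
          ∑ i, ∑ y ∈ (QBox d R0).filter (fun y => y + Pi.single i 1 ∈ QBox d R0),
            (∑ x ∈ L, gradSq φ i (x + y) - ∑ x ∈ L, gradSq φ' i (x + y)) := by
        simp only [sum_sub_distrib]; ring
    _ = -∑ i, D i + ∑ i, D i := by
        rw [sum_congr rfl fun i _ => hD0 i,
          sum_congr rfl fun i _ => sum_congr rfl fun y hy => hD i y hy,
          sum_filter_add_single_mem_QBox_const hR0]
    _ = 0 := neg_add_cancel _

theorem NL0_affine (hR0 : 1 ≤ R0) (ψ : QBox d R0 → Fin m → ℝ)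
    (T : (Fin d → ℝ) →ₗ[ℝ] (Fin m → ℝ)) (b : Fin m → ℝ)
    (hψ : ∀ y : QBox d R0, ψ y = T (fun j => ((y : Fin d → ℤ) j : ℝ)) + b) : NL0 ψ = 0 := by
  set φ : (Fin d → ℤ) → Fin m → ℝ := fun x => T (fun j => (x j : ℝ)) + b with hφ
  have hψ' : ψ = fun y : QBox d R0 => φ (0 + y) := by
    ext1 y
    simp [hφ, hψ]
  rw [hψ', NL0_translate hR0, hφ]
  simp only [gradSq_affine, sum_filter_add_single_mem_QBox_const hR0, neg_add_cancel]

theorem stmt9_general (d m R0 : ℕ) (hR0 : 1 ≤ R0) :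
    IsDiscreteNullLagrangian (QBox d R0) (NL0 (d := d) (m := m) (R0 := R0)) ∧
    ∀ (ψ : ↥(QBox d R0) → Fin m → ℝ) (T : (Fin d → ℝ) →ₗ[ℝ] (Fin m → ℝ)) (b : Fin m → ℝ),
      (∀ y : ↥(QBox d R0), ψ y = T (fun j => (((y : Fin d → ℤ) j : ℝ))) + b) →
      NL0 ψ = 0 :=
  ⟨isDiscreteNullLagrangian_NL0 hR0, NL0_affine hR0⟩

/-- `𝒩₀` is a discrete null Lagrangian and vanishes on restrictions of affine maps. -/
theorem stmt9 (d m R0 : ℕ) (hd : 1 ≤ d) (hm : 1 ≤ m) (hR0 : 1 ≤ R0) :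
    IsDiscreteNullLagrangian (QBox d R0) (NL0 (d := d) (m := m) (R0 := R0)) ∧
    ∀ (ψ : ↥(QBox d R0) → Fin m → ℝ) (T : (Fin d → ℝ) →ₗ[ℝ] (Fin m → ℝ)) (b : Fin m → ℝ),
      (∀ y : ↥(QBox d R0), ψ y = T (fun j => (((y : Fin d → ℤ) j : ℝ))) + b) →
      NL0 ψ = 0 :=
  stmt9_general d m R0 hR0
end

section
/- Let n ≥ 1 and let A, B, C be Hermitian n×n complex matrices such that C is positive definite, A and B are positive definite, B − A is positive semidefinite, and C⁻¹ − B is positive definite. Then A⁻¹ − C and B⁻¹ − C are positive definite, and (B⁻¹ − C)⁻¹ − (A⁻¹ − C)⁻¹ is positive semidefinite; that is, the map A ↦ (A⁻¹ − C)⁻¹ is matrix monotone on the set of positive definite Hermitian matrices A with A < C⁻¹. -/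
/-!
Matrices with the Loewner order form a unital C⋆-algebra, where inversion is antitone on
strictly positive elements. If `0 < a < b`, then `a⁻¹ - b⁻¹ = a⁻¹ (b - a) b⁻¹` is moreover a
unit, so `b⁻¹ < a⁻¹` strictly. Applied to `b < c⁻¹` and `a ≤ b < c⁻¹` this makes `a⁻¹ - c` and
`b⁻¹ - c` strictly positive, and `b⁻¹ - c ≤ a⁻¹ - c`; inverting once more gives the claim.
-/

open scoped ComplexOrder

namespace CStarAlgebra

open Ring

variable {A : Type*} [CStarAlgebra A] [PartialOrder A] [StarOrderedRing A]

lemma isStrictlyPositive_ringInverse_sub_ringInverse {a b : A} (ha : IsStrictlyPositive a)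
    (hab : IsStrictlyPositive (b - a)) : IsStrictlyPositive (a⁻¹ʳ - b⁻¹ʳ) := by
  have hb : IsStrictlyPositive b := by simpa using ha.add_nonneg hab.nonneg
  refine ⟨sub_nonneg.2 (ringInverse_le_ringInverse (sub_nonneg.1 hab.nonneg)), ?_⟩
  rw [Ring.inverse_sub_inverse (iff_of_true ha.isUnit hb.isUnit)]
  exact (ha.isUnit.ringInverse.mul hab.isUnit).mul hb.isUnit.ringInverse

theorem ringInverse_ringInverse_sub_le {a b c : A} (ha : IsStrictlyPositive a) (hab : a ≤ b)
    (hcb : IsStrictlyPositive (c⁻¹ʳ - b)) :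
    IsStrictlyPositive (a⁻¹ʳ - c) ∧ IsStrictlyPositive (b⁻¹ʳ - c) ∧
      (a⁻¹ʳ - c)⁻¹ʳ ≤ (b⁻¹ʳ - c)⁻¹ʳ := by
  have hb : IsStrictlyPositive b := ha.of_le hab
  have hcinv : IsStrictlyPositive c⁻¹ʳ := by simpa using hcb.add_nonneg hb.nonneg
  have hc : IsUnit c := isUnit_ringInverse.1 hcinv.isUnit
  have hca : IsStrictlyPositive (c⁻¹ʳ - a) := by
    simpa using hcb.add_nonneg (sub_nonneg.2 hab)
  have hac : IsStrictlyPositive (a⁻¹ʳ - c) := by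
    simpa [inverse_inverse hc] using isStrictlyPositive_ringInverse_sub_ringInverse ha hca
  have hbc : IsStrictlyPositive (b⁻¹ʳ - c) := by
    simpa [inverse_inverse hc] using isStrictlyPositive_ringInverse_sub_ringInverse hb hcb
  exact ⟨hac, hbc,
    ringInverse_le_ringInverse (sub_le_sub_right (ringInverse_le_ringInverse hab) c)⟩

end CStarAlgebra

open scoped MatrixOrder Matrix.Norms.L2Operator

theorem stmt12_general (n : ℕ) (A B C : Matrix (Fin n) (Fin n) ℂ) (hA : A.PosDef)
    (hAB : (B - A).PosSemidef) (hCB : (C⁻¹ - B).PosDef) :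
    (A⁻¹ - C).PosDef ∧ (B⁻¹ - C).PosDef ∧
      ((B⁻¹ - C)⁻¹ - (A⁻¹ - C)⁻¹).PosSemidef := by
  simp only [Matrix.nonsing_inv_eq_ringInverse, ← Matrix.isStrictlyPositive_iff_posDef,
    ← Matrix.nonneg_iff_posSemidef, sub_nonneg] at *
  exact CStarAlgebra.ringInverse_ringInverse_sub_le hA hAB hCB

/-- Matrix monotonicity of `A ↦ (A⁻¹ − C)⁻¹`: if `A, B, C` are Hermitian with `C` positive
definite, `A, B` positive definite, `A ≤ B` and `B < C⁻¹`, then `A⁻¹ − C` and `B⁻¹ − C` are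
positive definite and `(A⁻¹ − C)⁻¹ ≤ (B⁻¹ − C)⁻¹`. -/
theorem stmt12 (n : ℕ) (hn : 1 ≤ n) (A B C : Matrix (Fin n) (Fin n) ℂ)
    (hAherm : A.IsHermitian) (hBherm : B.IsHermitian) (hCherm : C.IsHermitian)
    (hC : C.PosDef) (hA : A.PosDef) (hB : B.PosDef)
    (hAB : (B - A).PosSemidef) (hCB : (C⁻¹ - B).PosDef) :
    (A⁻¹ - C).PosDef ∧ (B⁻¹ - C).PosDef ∧
      ((B⁻¹ - C)⁻¹ - (A⁻¹ - C)⁻¹).PosSemidef :=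
  stmt12_general n A B C hA hAB hCB
end

section
/- Let n ≥ 1 and let A, C be Hermitian n×n complex matrices with A positive semidefinite, C positive definite, and C⁻¹ − A positive definite. Then 𝟙 − A^{1/2} C A^{1/2} is positive definite, where A^{1/2} denotes the positive semidefinite square root of A, and A^{1/2} (𝟙 − A^{1/2} C A^{1/2})⁻¹ A^{1/2} = Σ_{i=0}^∞ A (C A)^i, the series on the right converging absolutely (in any matrix norm). -/
open scoped ComplexOrder

/-- The positive semidefinite square root of a positive semidefinite matrix (removed from Mathlib;
restored with its old definition). -/
noncomputable def Matrix.PosSemidef.sqrt {n : Type*} [Fintype n] [DecidableEq n]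
    {A : Matrix n n ℂ} (hA : A.PosSemidef) : Matrix n n ℂ :=
  hA.1.eigenvectorUnitary.1 * Matrix.diagonal ((↑) ∘ (Real.sqrt ·) ∘ hA.1.eigenvalues) *
  (star hA.1.eigenvectorUnitary : Matrix n n ℂ)

/-!
With `S = A^{1/2}` and `B = S C S`, the terms of the series are `A (C A)^k = S B^k S`.
The block matrix `[[C⁻¹, S], [S, 1]]` has the Schur complements `C⁻¹ - A` and `1 - B`, so the
hypothesis `C⁻¹ - A > 0` gives `1 - B > 0`. As `B ≥ 0`, its C⋆-norm `‖B‖` lies in its spectrum,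
hence `‖B‖ < 1`, and the Neumann series `∑ B^k = (1 - B)⁻¹` converges absolutely.
-/

open Matrix
open scoped MatrixOrder

lemma CStarAlgebra.norm_lt_one_of_isStrictlyPositive_one_sub {A : Type*} [CStarAlgebra A]
    [PartialOrder A] [StarOrderedRing A] {a : A} (ha : 0 ≤ a) (h : IsStrictlyPositive (1 - a)) :
    ‖a‖ < 1 := by
  nontriviality A
  have hmem : 1 - ‖a‖ ∈ spectrum ℝ (1 - a) := by
    rw [← algebraMap.coe_one (R := ℝ) (A := A), ← spectrum.singleton_sub_eq]
    exact Set.sub_mem_sub rfl (CStarAlgebra.norm_mem_spectrum_of_nonneg ha)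
  linarith [h.spectrum_pos hmem]

lemma mul_self_mul_pow_eq_mul_pow_mul {M : Type*} [Monoid M] (s c : M) (k : ℕ) :
    s * s * (c * (s * s)) ^ k = s * (s * c * s) ^ k * s := by
  have : SemiconjBy s (c * s * s) (s * c * s) := by simp only [SemiconjBy, mul_assoc]
  rw [mul_assoc, ← mul_assoc c, (this.pow_right k).eq]
  simp only [mul_assoc]

namespace Matrix

variable {n : Type*} [Fintype n] [DecidableEq n]

lemma PosSemidef.sqrt_eq_cfcSqrt {A : Matrix n n ℂ} (hA : A.PosSemidef) :
    hA.sqrt = CFC.sqrt A := by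
  rw [CFC.sqrt_eq_real_sqrt A hA.nonneg, cfcₙ_eq_cfc, hA.1.cfc_eq, IsHermitian.cfc,
    Unitary.conjStarAlgAut_apply]
  rfl

lemma PosSemidef.posSemidef_sqrt {A : Matrix n n ℂ} (hA : A.PosSemidef) : hA.sqrt.PosSemidef :=
  hA.sqrt_eq_cfcSqrt ▸ (CFC.sqrt_nonneg A).posSemidef

lemma PosSemidef.sqrt_mul_self {A : Matrix n n ℂ} (hA : A.PosSemidef) : hA.sqrt * hA.sqrt = A :=
  hA.sqrt_eq_cfcSqrt ▸ CFC.sqrt_mul_sqrt_self A hA.nonneg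

lemma PosDef.one_sub_conjTranspose_mul_mul {𝕜 m : Type*} [RCLike 𝕜] [Fintype m] [DecidableEq m]
    {C : Matrix m m 𝕜} {N : Matrix m n 𝕜} (hC : C.PosDef) (h : (C⁻¹ - N * Nᴴ).PosDef) :
    (1 - Nᴴ * C * N).PosDef := by
  have hCdet : IsUnit C.det := (isUnit_iff_isUnit_det C).mp hC.isUnit
  have : Invertible C⁻¹ := hC.inv.isUnit.invertible
  have : Invertible (1 : Matrix n n 𝕜) := invertibleOne
  have hblocks : (fromBlocks C⁻¹ N Nᴴ 1).PosSemidef := by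
    rw [PosDef.fromBlocks₂₂ _ _ (PosDef.one (n := n) (R := 𝕜))]
    simpa using h.posSemidef
  have hschur := (PosDef.fromBlocks₁₁ N 1 hC.inv).mp hblocks
  rw [nonsing_inv_nonsing_inv _ hCdet] at hschur
  -- the determinant of the block matrix factors through either Schur complement
  refine hschur.posDef_iff_det_ne_zero.mpr fun h0 => h.det_pos.ne' ?_
  have hdet := (det_fromBlocks₁₁ C⁻¹ N Nᴴ 1).symm.trans (det_fromBlocks₂₂ C⁻¹ N Nᴴ 1)
  rw [invOf_eq_nonsing_inv, nonsing_inv_nonsing_inv _ hCdet, h0, invOf_one] at hdet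
  simpa using hdet.symm

section L2OpNorm

open scoped Matrix.Norms.L2Operator

lemma l2_opNorm_apply_le {𝕜 m : Type*} [RCLike 𝕜] [Fintype m] (M : Matrix m n 𝕜) (i : m) (j : n) :
    ‖M i j‖ ≤ ‖M‖ := by
  have h := M.l2_opNorm_mulVec (EuclideanSpace.single j 1)
  rw [PiLp.norm_single, norm_one, mul_one] at h
  refine le_trans (le_of_eq ?_) ((PiLp.norm_apply_le _ i).trans h)
  simp

lemma PosSemidef.norm_lt_one {B : Matrix n n ℂ} (hB : B.PosSemidef) (h : (1 - B).PosDef) :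
    ‖B‖ < 1 :=
  CStarAlgebra.norm_lt_one_of_isStrictlyPositive_one_sub hB.nonneg h.isStrictlyPositive

lemma PosSemidef.hasSum_pow {B : Matrix n n ℂ} (hB : B.PosSemidef) (h : (1 - B).PosDef) :
    HasSum (B ^ ·) (1 - B)⁻¹ := by
  rw [nonsing_inv_eq_ringInverse]
  exact hasSum_geom_series_inverse B (hB.norm_lt_one h)

lemma PosSemidef.summable_norm_mul_pow_mul_apply {B : Matrix n n ℂ} (hB : B.PosSemidef)
    (h : (1 - B).PosDef) (X Y : Matrix n n ℂ) (i j : n) :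
    Summable fun k : ℕ => ‖(X * B ^ k * Y) i j‖ := by
  -- `‖B ^ 0‖ ≤ 1` needs a nontrivial matrix ring
  have : Nonempty n := ⟨i⟩
  refine .of_nonneg_of_le (fun _ => norm_nonneg _) (fun k => ?_)
    (((summable_geometric_of_lt_one (norm_nonneg B) (hB.norm_lt_one h)).mul_left ‖X‖).mul_right ‖Y‖)
  calc ‖(X * B ^ k * Y) i j‖ ≤ ‖X * B ^ k * Y‖ := l2_opNorm_apply_le _ i j
    _ ≤ ‖X‖ * ‖B‖ ^ k * ‖Y‖ := by grw [norm_mul_le, norm_mul_le, norm_pow_le]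

end L2OpNorm

end Matrix

theorem stmt13_general (n : ℕ) (A C : Matrix (Fin n) (Fin n) ℂ)
    (hA : A.PosSemidef) (hC : C.PosDef) (hCA : (C⁻¹ - A).PosDef) :
    (1 - hA.sqrt * C * hA.sqrt).PosDef ∧
    HasSum (fun i : ℕ => A * (C * A) ^ i)
      (hA.sqrt * (1 - hA.sqrt * C * hA.sqrt)⁻¹ * hA.sqrt) ∧
    ∀ i j, Summable (fun k : ℕ => ‖(A * (C * A) ^ k) i j‖) := by
  set S := hA.sqrt
  have hSH : Sᴴ = S := hA.posSemidef_sqrt.1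
  have hSS : S * S = A := hA.sqrt_mul_self
  have hB : (S * C * S).PosSemidef := by
    simpa only [hSH] using hC.posSemidef.conjTranspose_mul_mul_same S
  have h1B : (1 - S * C * S).PosDef := by
    simpa only [hSH] using hC.one_sub_conjTranspose_mul_mul (N := S) (by rwa [hSH, hSS])
  have hterm (k : ℕ) : A * (C * A) ^ k = S * (S * C * S) ^ k * S := by
    rw [← hSS, mul_self_mul_pow_eq_mul_pow_mul]
  simp only [hterm]
  exact ⟨h1B, ((hB.hasSum_pow h1B).mul_left S).mul_right S,
    hB.summable_norm_mul_pow_mul_apply h1B S S⟩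

/-- If `A` is positive semidefinite, `C` positive definite and `C⁻¹ − A` positive definite, then
`𝟙 − A^{1/2} C A^{1/2}` is positive definite and
`A^{1/2} (𝟙 − A^{1/2} C A^{1/2})⁻¹ A^{1/2} = ∑_{i=0}^∞ A (C A)^i`, the series converging
absolutely (equivalently, entrywise absolutely). -/
theorem stmt13 (n : ℕ) (hn : 1 ≤ n) (A C : Matrix (Fin n) (Fin n) ℂ)
    (hAherm : A.IsHermitian) (hCherm : C.IsHermitian)
    (hA : A.PosSemidef) (hC : C.PosDef) (hCA : (C⁻¹ - A).PosDef) :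
    (1 - hA.sqrt * C * hA.sqrt).PosDef ∧
    HasSum (fun i : ℕ => A * (C * A) ^ i)
      (hA.sqrt * (1 - hA.sqrt * C * hA.sqrt)⁻¹ * hA.sqrt) ∧
    ∀ i j, Summable (fun k : ℕ => ‖(A * (C * A) ^ k) i j‖) :=
  stmt13_general n A C hA hC hCA
end

section
/- Let d ≥ 1, let s ∈ ℕ₀, let ρ ≥ 1 be an integer, let f : ℤ^d → ℝ and a ∈ ℤ^d. Define the discrete Taylor polynomial Tay_a^s f(z) := Σ_{α ∈ ℕ₀^d, |α| ≤ s} ∇^α f(a) · b_α(z−a), where b_α(z) := ∏_{j=1}^d C(z_j, α_j) and C(t,k) := t(t−1)⋯(t−k+1)/k! for t ∈ ℤ, k ∈ ℕ₀ (C(t,0) = 1). Set M := max{ |∇^α f(z)| : |α| = s+1, z ∈ a + {0,…,ρ}^d }. Then for every multiindex β ∈ ℕ₀^d with t := |β| ≤ s and every z ∈ a + {0,…,ρ}^d: |∇^β( f − Tay_a^s f )(z)| ≤ M · C(|z−a|₁, s−t+1), where |z−a|₁ = Σ_{j=1}^d |z_j − a_j|. -/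
open scoped BigOperators

/-- Forward difference in direction `e_i` on `ℤ^d`. -/
def fd1 {d : ℕ} (i : Fin d) (f : (Fin d → ℤ) → ℝ) : (Fin d → ℤ) → ℝ :=
  fun x => f (x + Pi.single i 1) - f x

/-- Iterated forward difference in one direction. -/
def fdPow {d : ℕ} (i : Fin d) : ℕ → ((Fin d → ℤ) → ℝ) → (Fin d → ℤ) → ℝ
  | 0, f => f
  | k + 1, f => fd1 i (fdPow i k f)

/-- Multiindex forward difference `∇^α = ∇₁^{α₁} ⋯ ∇_d^{α_d}`. -/
def fdMulti {d : ℕ} (α : Fin d → ℕ) (f : (Fin d → ℤ) → ℝ) : (Fin d → ℤ) → ℝ :=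
  (List.finRange d).foldr (fun i g => fdPow i (α i) g) f

/-- Generalized binomial coefficient `C(t,k) = t(t−1)⋯(t−k+1)/k!` for `t ∈ ℤ`, `k ∈ ℕ`. -/
noncomputable def ichoose (t : ℤ) (k : ℕ) : ℝ :=
  (∏ j ∈ Finset.range k, ((t : ℝ) - (j : ℝ))) / (Nat.factorial k : ℝ)

/-- The basic polynomials `b_α(z) = ∏_j C(z_j, α_j)`. -/
noncomputable def bpoly {d : ℕ} (α : Fin d → ℕ) (z : Fin d → ℤ) : ℝ :=
  ∏ j, ichoose (z j) (α j)

/-- The discrete Taylor polynomial `Tay_a^s f(z) = ∑_{|α| ≤ s} ∇^α f(a) b_α(z−a)`. -/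
noncomputable def discTaylor {d : ℕ} (s : ℕ) (f : (Fin d → ℤ) → ℝ) (a z : Fin d → ℤ) : ℝ :=
  ∑ α ∈ (Finset.Iic (fun _ : Fin d => s)).filter (fun α => ∑ j, α j ≤ s),
    fdMulti α f a * bpoly α (z - a)

/-!
Put `g = f − Tay_a^s f`. The forward differences commute and act factorwise on the products
`b_α(· − a)`, with `∇ C(· − c, m) = C(· − c, m − 1)`; hence `∇^β b_α(· − a)` is `b_{α−β}(· − a)`
for `β ≤ α` and `0` otherwise. So `∇^β g(a) = 0` for `|β| ≤ s`, and `∇^γ g = ∇^γ f` for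
`|γ| = s + 1`.

Now induct on `n = |z − a|₁`, proving `|∇^β g(z)| ≤ M · C(n, s + 1 − |β|)` for all `|β| ≤ s + 1`;
for `|β| = s + 1` this is the hypothesis on `f`. If `z ≠ a` lies in the box, then `z = z' + e_i`
with `z'` in the box and `|z' − a|₁ = n − 1`, and
`∇^β g(z) = ∇^β g(z') + ∇^{β+e_i} g(z')`, so Pascal's rule closes the induction.
-/

open scoped IsMulCommutative

section

variable {d : ℕ}

lemma fd1_comm (i j : Fin d) (f : (Fin d → ℤ) → ℝ) : fd1 i (fd1 j f) = fd1 j (fd1 i f) := by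
  funext x
  simp only [fd1, add_right_comm x (Pi.single j 1) (Pi.single i 1)]
  ring

def fd1ₗ (i : Fin d) : Module.End ℝ ((Fin d → ℤ) → ℝ) where
  toFun := fd1 i
  map_add' := fwdDiff_add _
  map_smul' := fwdDiff_const_smul _

/- The `∇_i` commute, so `∇^α` is the monomial `∏ ∇_i ^ α_i` in the commutative algebra they
generate; this yields `∇^{α+β} = ∇^α ∇^β` without reordering the fold in `fdMulti`. -/
variable (d) in
abbrev diffAlgebra : Subalgebra ℝ (Module.End ℝ ((Fin d → ℤ) → ℝ)) :=
  Algebra.adjoin ℝ (Set.range fd1ₗ)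

instance : IsMulCommutative (diffAlgebra d) :=
  Algebra.isMulCommutative_adjoin ℝ <| by
    rintro _ ⟨i, rfl⟩ _ ⟨j, rfl⟩
    exact LinearMap.ext (fd1_comm i j)

def diffMonomial (α : Fin d → ℕ) : diffAlgebra d :=
  ∏ i, ⟨fd1ₗ i, Algebra.subset_adjoin ⟨i, rfl⟩⟩ ^ α i

lemma fdPow_eq_pow_apply (i : Fin d) (k : ℕ) (f : (Fin d → ℤ) → ℝ) :
    fdPow i k f = (fd1ₗ i ^ k) f := by
  induction k with
  | zero => rfl
  | succ k ih => rw [pow_succ', Module.End.mul_apply, ← ih]; rfl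

lemma foldr_fdPow_eq_prod (l : List (Fin d)) (α : Fin d → ℕ) (f : (Fin d → ℤ) → ℝ) :
    l.foldr (fun i g => fdPow i (α i) g) f = (l.map fun i => fd1ₗ i ^ α i).prod f := by
  induction l with
  | nil => rfl
  | cons i l ih =>
    rw [List.foldr_cons, ih, fdPow_eq_pow_apply, List.map_cons, List.prod_cons,
      Module.End.mul_apply]

lemma fdMulti_eq_diffMonomial (α : Fin d → ℕ) (f : (Fin d → ℤ) → ℝ) :
    fdMulti α f = (diffMonomial α : Module.End ℝ ((Fin d → ℤ) → ℝ)) f := by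
  rw [fdMulti, foldr_fdPow_eq_prod, diffMonomial, Fin.prod_univ_def, ← Subalgebra.val_apply,
    map_list_prod, List.map_map]
  rfl

lemma fdMulti_zero (f : (Fin d → ℤ) → ℝ) : fdMulti 0 f = f := by
  simp [fdMulti_eq_diffMonomial, diffMonomial]

lemma fdMulti_add (α β : Fin d → ℕ) (f : (Fin d → ℤ) → ℝ) :
    fdMulti (α + β) f = fdMulti α (fdMulti β f) := by
  simp only [fdMulti_eq_diffMonomial, diffMonomial, Pi.add_apply, pow_add,
    Finset.prod_mul_distrib, Subalgebra.coe_mul, Module.End.mul_apply]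

lemma fdMulti_single (i : Fin d) (m : ℕ) (f : (Fin d → ℤ) → ℝ) :
    fdMulti (Pi.single i m) f = (fd1 i)^[m] f := by
  rw [fdMulti_eq_diffMonomial, diffMonomial, Finset.prod_eq_single_of_mem i (Finset.mem_univ i)
    fun j _ hj => by rw [Pi.single_eq_of_ne hj, pow_zero], Pi.single_eq_same,
    Subalgebra.coe_pow, Module.End.pow_apply]
  rfl

lemma fdMulti_add_single (β : Fin d → ℕ) (i : Fin d) (f : (Fin d → ℤ) → ℝ) :
    fdMulti (β + Pi.single i 1) f = fd1 i (fdMulti β f) := by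
  rw [add_comm, fdMulti_add, fdMulti_single, Function.iterate_one]

lemma fdMulti_sub (β : Fin d → ℕ) (f g : (Fin d → ℤ) → ℝ) :
    fdMulti β (f - g) = fdMulti β f - fdMulti β g := by
  simp only [fdMulti_eq_diffMonomial, map_sub]

lemma fdMulti_sum_smul {ι : Type*} (β : Fin d → ℕ) (S : Finset ι) (c : ι → ℝ)
    (F : ι → (Fin d → ℤ) → ℝ) :
    fdMulti β (∑ x ∈ S, c x • F x) = ∑ x ∈ S, c x • fdMulti β (F x) := by
  simp only [fdMulti_eq_diffMonomial, map_sum, map_smul]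

lemma fd1_fun_prod (i : Fin d) (v : Fin d → ℤ → ℝ) :
    fd1 i (fun w => ∏ j, v j (w j))
      = fun w => ∏ j, Function.update v i (fwdDiff 1 (v i)) j (w j) := by
  funext w
  have hupdate (c : ℝ) : ∏ j, Function.update (fun j => v j (w j)) i c j
      = c * ∏ j ∈ Finset.univ \ {i}, v j (w j) :=
    Finset.prod_update_of_mem (Finset.mem_univ i) _ _
  have hshift : ∏ j, v j ((w + Pi.single i 1 : Fin d → ℤ) j)
      = ∏ j, Function.update (fun j => v j (w j)) i (v i (w i + 1)) j := by
    congr 1 with j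
    rcases eq_or_ne j i with rfl | hj <;> simp [*]
  have hdiff : ∏ j, Function.update v i (fwdDiff 1 (v i)) j (w j)
      = ∏ j, Function.update (fun j => v j (w j)) i (fwdDiff 1 (v i) (w i)) j := by
    congr 1 with j
    rcases eq_or_ne j i with rfl | hj <;> simp [*]
  have hsame : ∏ j, v j (w j) = ∏ j, Function.update (fun j => v j (w j)) i (v i (w i)) j := by
    rw [Function.update_eq_self]
  rw [fd1, hshift, hdiff, hsame, hupdate, hupdate, hupdate, fwdDiff]
  ring

lemma fd1_iterate_fun_prod (i : Fin d) (m : ℕ) (v : Fin d → ℤ → ℝ) :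
    (fd1 i)^[m] (fun w => ∏ j, v j (w j))
      = fun w => ∏ j, Function.update v i ((fwdDiff 1)^[m] (v i)) j (w j) := by
  induction m generalizing v with
  | zero => simp
  | succ m ih =>
    rw [Function.iterate_succ_apply, fd1_fun_prod, ih, Function.update_idem, Function.update_self,
      Function.iterate_succ_apply]

lemma fdMulti_fun_prod (β : Fin d → ℕ) (v : Fin d → ℤ → ℝ) :
    fdMulti β (fun w => ∏ j, v j (w j)) = fun w => ∏ j, (fwdDiff 1)^[β j] (v j) (w j) := by
  induction β using Pi.single_induction generalizing v with
  | zero => simp [fdMulti_zero]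
  | add β γ hβ hγ => simp only [fdMulti_add, hγ, hβ, Pi.add_apply, Function.iterate_add_apply]
  | single i m =>
    rw [fdMulti_single, fd1_iterate_fun_prod]
    congr 1 with w
    congr 1 with j
    rcases eq_or_ne j i with rfl | hj <;> simp [*]

lemma ichoose_eq_choose (t : ℤ) (k : ℕ) : ichoose t k = ((Ring.choose t k : ℤ) : ℝ) := by
  have h : (∏ j ∈ Finset.range k, (t - j) : ℤ) = k.factorial * Ring.choose t k := by
    rw [← descPochhammer_eval_eq_prod_range, Polynomial.eval_eq_smeval,
      Ring.descPochhammer_eq_factorial_smul_choose, nsmul_eq_mul]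
  have hk : (k.factorial : ℝ) ≠ 0 := by positivity
  rw [ichoose, div_eq_iff hk, mul_comm]
  exact_mod_cast h

lemma ichoose_natCast (n k : ℕ) : ichoose n k = n.choose k := by
  rw [ichoose_eq_choose, Ring.choose_natCast]
  norm_cast

lemma fwdDiff_choose_sub (c : ℤ) (m : ℕ) :
    fwdDiff 1 (fun t : ℤ => ((Ring.choose (t - c) (m + 1) : ℤ) : ℝ))
      = fun t => ((Ring.choose (t - c) m : ℤ) : ℝ) := by
  funext t
  rw [fwdDiff, add_sub_right_comm, Ring.choose_succ_succ, Int.cast_add]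
  ring

lemma fwdDiff_iterate_choose_sub (c : ℤ) (m k : ℕ) :
    (fwdDiff 1)^[k] (fun t : ℤ => ((Ring.choose (t - c) m : ℤ) : ℝ))
      = fun t => if k ≤ m then ((Ring.choose (t - c) (m - k) : ℤ) : ℝ) else 0 := by
  induction k with
  | zero => simp
  | succ k ih =>
    rw [Function.iterate_succ_apply', ih]
    rcases lt_trichotomy k m with hk | rfl | hk
    · obtain ⟨n, rfl⟩ := Nat.exists_eq_add_of_lt hk
      simp only [if_pos (by omega : k ≤ k + n + 1), if_pos (by omega : k + 1 ≤ k + n + 1),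
        show k + n + 1 - k = n + 1 by omega, show k + n + 1 - (k + 1) = n by omega]
      exact fwdDiff_choose_sub c n
    · simp
    · simp [show ¬ k ≤ m by omega, show ¬ k + 1 ≤ m by omega]

lemma fdMulti_bpoly_sub (α β : Fin d → ℕ) (a : Fin d → ℤ) :
    fdMulti β (fun w => bpoly α (w - a)) = fun z =>
      ∏ j, if β j ≤ α j then ((Ring.choose (z j - a j) (α j - β j) : ℤ) : ℝ) else 0 := by
  simp only [bpoly, Pi.sub_apply, ichoose_eq_choose]
  rw [fdMulti_fun_prod β fun j t => ((Ring.choose (t - a j) (α j) : ℤ) : ℝ)]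
  simp only [fwdDiff_iterate_choose_sub]

lemma fdMulti_bpoly_sub_self (α β : Fin d → ℕ) (a : Fin d → ℤ) :
    fdMulti β (fun w => bpoly α (w - a)) a = if β = α then 1 else 0 := by
  calc fdMulti β (fun w => bpoly α (w - a)) a = ∏ j, if β j = α j then (1 : ℝ) else 0 := by
        rw [fdMulti_bpoly_sub]
        refine Finset.prod_congr rfl fun j _ => ?_
        rw [sub_self, Ring.choose_zero_ite]
        split_ifs <;> first | omega | simp
    _ = if β = α then 1 else 0 := by simp [Finset.prod_boole, funext_iff]

lemma fdMulti_bpoly_sub_eq_zero {α β : Fin d → ℕ} (h : ∑ j, α j < ∑ j, β j) (a : Fin d → ℤ) :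
    fdMulti β (fun w => bpoly α (w - a)) = 0 := by
  obtain ⟨j, -, hj⟩ := Finset.exists_lt_of_sum_lt h
  funext z
  rw [fdMulti_bpoly_sub]
  exact Finset.prod_eq_zero (Finset.mem_univ j) (if_neg (not_le.mpr hj))

lemma discTaylor_eq_sum (s : ℕ) (f : (Fin d → ℤ) → ℝ) (a : Fin d → ℤ) :
    discTaylor s f a = ∑ α ∈ (Finset.Iic fun _ : Fin d => s).filter (fun α => ∑ j, α j ≤ s),
      fdMulti α f a • fun w => bpoly α (w - a) := by
  funext z
  simp [discTaylor, Finset.sum_apply]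

lemma fdMulti_discTaylor_self {s : ℕ} {β : Fin d → ℕ} (hβ : ∑ j, β j ≤ s)
    (f : (Fin d → ℤ) → ℝ) (a : Fin d → ℤ) :
    fdMulti β (discTaylor s f a) a = fdMulti β f a := by
  have hmem : β ∈ (Finset.Iic fun _ : Fin d => s).filter (fun α => ∑ j, α j ≤ s) :=
    Finset.mem_filter.mpr ⟨Finset.mem_Iic.mpr fun j =>
      (Finset.single_le_sum (fun _ _ => Nat.zero_le _) (Finset.mem_univ j)).trans hβ, hβ⟩
  simp [discTaylor_eq_sum, fdMulti_sum_smul, Finset.sum_apply, fdMulti_bpoly_sub_self, hmem]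

lemma fdMulti_discTaylor_eq_zero {s : ℕ} {γ : Fin d → ℕ} (hγ : s < ∑ j, γ j)
    (f : (Fin d → ℤ) → ℝ) (a : Fin d → ℤ) :
    fdMulti γ (discTaylor s f a) = 0 := by
  rw [discTaylor_eq_sum, fdMulti_sum_smul]
  refine Finset.sum_eq_zero fun α hα => ?_
  rw [fdMulti_bpoly_sub_eq_zero ((Finset.mem_filter.mp hα).2.trans_lt hγ), smul_zero]

lemma eq_of_sum_natAbs_sub_eq_zero {z a : Fin d → ℤ} (h : ∑ j, (z j - a j).natAbs = 0) : z = a :=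
  funext fun j => by
    have := Finset.sum_eq_zero_iff.mp h j (Finset.mem_univ j)
    omega

lemma exists_mem_Icc_eq_add_single {a b z : Fin d → ℤ} (hz : z ∈ Finset.Icc a b) (hza : z ≠ a) :
    ∃ z' ∈ Finset.Icc a b, ∃ i, z = z' + Pi.single i 1 ∧
      ∑ j, (z j - a j).natAbs = ∑ j, (z' j - a j).natAbs + 1 := by
  obtain ⟨haz, hzb⟩ := Finset.mem_Icc.mp hz
  obtain ⟨i, hi⟩ := Function.ne_iff.mp hza
  have hlt : a i < z i := lt_of_le_of_ne (haz i) (Ne.symm hi)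
  refine ⟨z - Pi.single i 1, Finset.mem_Icc.mpr ⟨fun j => ?_, fun j => ?_⟩, i, by simp, ?_⟩
  · rcases eq_or_ne j i with rfl | hj
    · rw [Pi.sub_apply, Pi.single_eq_same]; linarith
    · simpa [hj] using haz j
  · rcases eq_or_ne j i with rfl | hj
    · rw [Pi.sub_apply, Pi.single_eq_same]; linarith [hzb j]
    · simpa [hj] using hzb j
  · rw [← Finset.add_sum_erase _ _ (Finset.mem_univ i),
      ← Finset.add_sum_erase _ _ (Finset.mem_univ i)]
    have hrest : ∑ j ∈ Finset.univ.erase i, ((z - Pi.single i 1 : Fin d → ℤ) j - a j).natAbs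
        = ∑ j ∈ Finset.univ.erase i, (z j - a j).natAbs :=
      Finset.sum_congr rfl fun j hj => by simp [Finset.ne_of_mem_erase hj]
    rw [hrest, Pi.sub_apply, Pi.single_eq_same]
    omega

theorem abs_fdMulti_le_choose {g : (Fin d → ℤ) → ℝ} {a b : Fin d → ℤ} {s : ℕ} {M : ℝ}
    (htop : ∀ γ : Fin d → ℕ, ∑ j, γ j = s + 1 → ∀ z ∈ Finset.Icc a b, |fdMulti γ g z| ≤ M)
    (hbase : ∀ β : Fin d → ℕ, ∑ j, β j ≤ s → fdMulti β g a = 0)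
    {β : Fin d → ℕ} (hβ : ∑ j, β j ≤ s + 1) {z : Fin d → ℤ} (hz : z ∈ Finset.Icc a b) :
    |fdMulti β g z| ≤ M * (∑ j, (z j - a j).natAbs).choose (s + 1 - ∑ j, β j) := by
  induction hn : ∑ j, (z j - a j).natAbs generalizing β z with
  | zero =>
    rcases hβ.eq_or_lt with hβ | hβ
    · simpa [hβ] using htop β hβ z hz
    rw [eq_of_sum_natAbs_sub_eq_zero hn, hbase β (by omega), abs_zero,
      Nat.choose_eq_zero_of_lt (by omega), Nat.cast_zero, mul_zero]
  | succ n ih =>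
    rcases hβ.eq_or_lt with hβ | hβ
    · simpa [hβ] using htop β hβ z hz
    obtain ⟨z', hz', i, rfl, hdist⟩ := exists_mem_Icc_eq_add_single hz (by rintro rfl; simp at hn)
    obtain ⟨k, hk⟩ : ∃ k, s + 1 - ∑ j, β j = k + 1 := ⟨s - ∑ j, β j, by omega⟩
    have hsum : ∑ j, (β + Pi.single i 1 : Fin d → ℕ) j = ∑ j, β j + 1 := by
      simp [Finset.sum_add_distrib]
    have hsplit : fdMulti β g (z' + Pi.single i 1)
        = fdMulti β g z' + fdMulti (β + Pi.single i 1) g z' := by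
      rw [fdMulti_add_single, fd1]
      ring
    have h1 := ih (β := β) hβ.le hz' (by omega)
    have h2 := ih (β := β + Pi.single i 1) (by omega) hz' (by omega)
    rw [hk] at h1
    rw [hsum, show s + 1 - (∑ j, β j + 1) = k by omega] at h2
    rw [hsplit, hk, Nat.choose_succ_succ', Nat.cast_add, mul_add, add_comm (M * _)]
    exact (abs_add_le _ _).trans (add_le_add h1 h2)

end

theorem stmt15_general (d s ρ : ℕ)
    (f : (Fin d → ℤ) → ℝ) (a : Fin d → ℤ) (M : ℝ)
    (hM : ∀ α : Fin d → ℕ, (∑ j, α j) = s + 1 →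
      ∀ z ∈ Finset.Icc a (fun j => a j + (ρ : ℤ)), |fdMulti α f z| ≤ M) :
    ∀ β : Fin d → ℕ, (∑ j, β j) ≤ s →
      ∀ z ∈ Finset.Icc a (fun j => a j + (ρ : ℤ)),
        |fdMulti β (fun w => f w - discTaylor s f a w) z|
          ≤ M * ichoose (∑ j, ((z j - a j).natAbs : ℤ)) (s - (∑ j, β j) + 1) := by
  intro β hβ z hz
  have hremainder : |fdMulti β (f - discTaylor s f a) z|
      ≤ M * (∑ j, (z j - a j).natAbs).choose (s + 1 - ∑ j, β j) := by
    refine abs_fdMulti_le_choose (fun γ hγ w hw => ?_) (fun β' hβ' => ?_) (by omega) hz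
    · rw [fdMulti_sub, fdMulti_discTaylor_eq_zero (by omega), sub_zero]
      exact hM γ hγ w hw
    · rw [fdMulti_sub, Pi.sub_apply, fdMulti_discTaylor_self hβ', sub_self]
  rwa [← Nat.cast_sum, ichoose_natCast, show s - ∑ j, β j + 1 = s + 1 - ∑ j, β j by omega]

/-- Discrete Taylor remainder estimate: if `M` bounds `|∇^α f|` on `a + {0,…,ρ}^d` for all
`|α| = s+1`, then for every `β` with `t = |β| ≤ s` and every `z ∈ a + {0,…,ρ}^d`,
`|∇^β(f − Tay_a^s f)(z)| ≤ M · C(|z−a|₁, s−t+1)`. -/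
theorem stmt15 (d s ρ : ℕ) (hd : 1 ≤ d) (hρ : 1 ≤ ρ)
    (f : (Fin d → ℤ) → ℝ) (a : Fin d → ℤ) (M : ℝ)
    (hM : ∀ α : Fin d → ℕ, (∑ j, α j) = s + 1 →
      ∀ z ∈ Finset.Icc a (fun j => a j + (ρ : ℤ)), |fdMulti α f z| ≤ M) :
    ∀ β : Fin d → ℕ, (∑ j, β j) ≤ s →
      ∀ z ∈ Finset.Icc a (fun j => a j + (ρ : ℤ)),
        |fdMulti β (fun w => f w - discTaylor s f a w) z|
          ≤ M * ichoose (∑ j, ((z j - a j).natAbs : ℤ)) (s - (∑ j, β j) + 1) :=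
  stmt15_general d s ρ f a M hM
end
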